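/- arXiv:0909.0071 — 5 statements merged into one kernel-verified Lean document; each statement's English description precedes it below -/
import Mathlib

section
/- Let L be a metric flag edge-labeled triangulation of S² that is not the suspension of a 3-gon, and let s be a 4-Euclidean vertex of L with link 4-cycle s₀, s₁, s₂, s₃. Then the link L_s and the star St_L(s) are full subcomplexes of L; in particular neither {s₀,s₂} nor {s₁,s₃} is an edge of L, and no 2-simplex of L has all its vertices among s₀, s₁, s₂, s₃. -/
open Finset

/-- A combinatorial triangulation of the 2-sphere: a finite simplicial complex all of
whose maximal simplices are 2-simplices (triangles), such that every edge is contained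
in exactly two 2-simplices, the link of every vertex is connected, the complex is
connected, and the Euler characteristic is `2`.  By the classification of closed
surfaces, these conditions hold precisely when the geometric realization of the
complex is homeomorphic to `S²`.  The complex is recorded by its set of 2-simplices
(`faces`); its simplices are the vertices, the edges (2-element subsets of faces) and
the faces. -/
structure S2Triangulation (V : Type) [Fintype V] [DecidableEq V] : Type where
  /-- The 2-simplices. -/
  faces : Finset (Finset V)
  card_eq_three : ∀ f ∈ faces, f.card = 3
  /-- Every vertex lies in some 2-simplex. -/
  vertex_mem : ∀ v : V, ∃ f ∈ faces, v ∈ f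
  /-- Every edge lies in exactly two 2-simplices. -/
  edge_two_faces : ∀ e : Finset V, e.card = 2 → (∃ f ∈ faces, e ⊆ f) →
    (faces.filter fun f => e ⊆ f).card = 2
  /-- The link of every vertex is connected (so, with the other axioms, a cycle). -/
  link_connected : ∀ s u w : V,
    (s ≠ u ∧ ∃ f ∈ faces, s ∈ f ∧ u ∈ f) →
    (s ≠ w ∧ ∃ f ∈ faces, s ∈ f ∧ w ∈ f) →
    Relation.ReflTransGen (fun a b : V => a ≠ b ∧ ({s, a, b} : Finset V) ∈ faces) u w
  /-- The complex is connected. -/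
  conn : ∀ u w : V,
    Relation.ReflTransGen (fun a b : V => a ≠ b ∧ ∃ f ∈ faces, a ∈ f ∧ b ∈ f) u w
  /-- Euler characteristic 2:  #vertices - #edges + #faces = 2. -/
  euler : Fintype.card V + faces.card
      = (Finset.univ.filter fun e : Finset V => e.card = 2 ∧ ∃ f ∈ faces, e ⊆ f).card + 2

namespace S2Triangulation

variable {V : Type} [Fintype V] [DecidableEq V]

/-- Two vertices are adjacent (joined by an edge of `L`) if they are distinct and lie
in a common 2-simplex. -/
def Adj (L : S2Triangulation V) (u w : V) : Prop :=
  u ≠ w ∧ ∃ f ∈ L.faces, u ∈ f ∧ w ∈ f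

instance (L : S2Triangulation V) (u w : V) : Decidable (L.Adj u w) :=
  inferInstanceAs (Decidable (u ≠ w ∧ ∃ f ∈ L.faces, u ∈ f ∧ w ∈ f))

/-- The vertex set of the link of a vertex `s`. -/
def linkVerts (L : S2Triangulation V) (s : V) : Finset V :=
  Finset.univ.filter fun u => L.Adj s u

/-- An edge labeling of `L`: an assignment of an integer `m u w = m w u ≥ 2` to each
edge `{u, w}` of `L`. -/
structure EdgeLabeling (L : S2Triangulation V) : Type where
  m : V → V → ℕ
  symm : ∀ u w : V, m u w = m w u
  two_le : ∀ u w : V, L.Adj u w → 2 ≤ m u w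

/-- The labeled complex is metric flag: three pairwise adjacent (distinct) vertices
span a 2-simplex if and only if the sum of the reciprocals of the three labels
exceeds `1`. -/
def MetricFlag (L : S2Triangulation V) (M : EdgeLabeling L) : Prop :=
  ∀ s t u : V, L.Adj s t → L.Adj t u → L.Adj u s →
    (({s, t, u} : Finset V) ∈ L.faces ↔
      1 < (M.m s t : ℚ)⁻¹ + (M.m t u : ℚ)⁻¹ + (M.m u s : ℚ)⁻¹)

/-- `s` is a 3-Euclidean vertex: it has valence 3 and its link is a 3-cycle
`s₀, s₁, s₂` with `1/m s₀ s₁ + 1/m s₁ s₂ + 1/m s₂ s₀ = 1`. -/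
def Is3Euclidean (L : S2Triangulation V) (M : EdgeLabeling L) (s : V) : Prop :=
  ∃ s0 s1 s2 : V, s0 ≠ s1 ∧ s1 ≠ s2 ∧ s0 ≠ s2 ∧
    L.linkVerts s = {s0, s1, s2} ∧
    ({s, s0, s1} : Finset V) ∈ L.faces ∧ ({s, s1, s2} : Finset V) ∈ L.faces ∧
    ({s, s2, s0} : Finset V) ∈ L.faces ∧
    (M.m s0 s1 : ℚ)⁻¹ + (M.m s1 s2 : ℚ)⁻¹ + (M.m s2 s0 : ℚ)⁻¹ = 1

/-- The link of `s` is the 4-cycle `s₀, s₁, s₂, s₃` and all four consecutive labels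
are `2`; i.e. `s` is 4-Euclidean with link 4-cycle `s₀, s₁, s₂, s₃`. -/
def Is4EuclideanCycle (L : S2Triangulation V) (M : EdgeLabeling L)
    (s s0 s1 s2 s3 : V) : Prop :=
  s0 ≠ s1 ∧ s0 ≠ s2 ∧ s0 ≠ s3 ∧ s1 ≠ s2 ∧ s1 ≠ s3 ∧ s2 ≠ s3 ∧
  L.linkVerts s = {s0, s1, s2, s3} ∧
  ({s, s0, s1} : Finset V) ∈ L.faces ∧ ({s, s1, s2} : Finset V) ∈ L.faces ∧
  ({s, s2, s3} : Finset V) ∈ L.faces ∧ ({s, s3, s0} : Finset V) ∈ L.faces ∧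
  ({s, s0, s2} : Finset V) ∉ L.faces ∧ ({s, s1, s3} : Finset V) ∉ L.faces ∧
  M.m s0 s1 = 2 ∧ M.m s1 s2 = 2 ∧ M.m s2 s3 = 2 ∧ M.m s3 s0 = 2

/-- `s` is a 4-Euclidean vertex: it has valence 4 and its link is a 4-cycle
`s₀, s₁, s₂, s₃` with `m sᵢ sᵢ₊₁ = 2` for `i = 0, 1, 2, 3` (mod 4). -/
def Is4Euclidean (L : S2Triangulation V) (M : EdgeLabeling L) (s : V) : Prop :=
  ∃ s0 s1 s2 s3 : V, Is4EuclideanCycle L M s s0 s1 s2 s3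

/-- A Euclidean vertex is one that is 3-Euclidean or 4-Euclidean. -/
def IsEuclidean (L : S2Triangulation V) (M : EdgeLabeling L) (s : V) : Prop :=
  Is3Euclidean L M s ∨ Is4Euclidean L M s

/-- `s₀, s₁, s₂, s₃` is an empty Euclidean 4-circuit: a 4-cycle in the 1-skeleton with
all four labels `2`, which is not the vertex set of the link of any vertex and is not
the boundary of the union of two 2-simplices of `L` sharing an edge. -/
def IsEmptyEuclidean4Circuit (L : S2Triangulation V) (M : EdgeLabeling L)
    (s0 s1 s2 s3 : V) : Prop :=
  s0 ≠ s1 ∧ s0 ≠ s2 ∧ s0 ≠ s3 ∧ s1 ≠ s2 ∧ s1 ≠ s3 ∧ s2 ≠ s3 ∧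
  L.Adj s0 s1 ∧ L.Adj s1 s2 ∧ L.Adj s2 s3 ∧ L.Adj s3 s0 ∧
  M.m s0 s1 = 2 ∧ M.m s1 s2 = 2 ∧ M.m s2 s3 = 2 ∧ M.m s3 s0 = 2 ∧
  (∀ x : V, L.linkVerts x ≠ {s0, s1, s2, s3}) ∧
  ¬ ((({s0, s1, s2} : Finset V) ∈ L.faces ∧ ({s0, s2, s3} : Finset V) ∈ L.faces) ∨
     (({s1, s2, s3} : Finset V) ∈ L.faces ∧ ({s1, s3, s0} : Finset V) ∈ L.faces))

/-- `L` is the suspension of the `n`-gon `c₀, …, c_{n-1}` with suspension points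
`p, q`: the vertex set of `L` is `{p, q, c₀, …, c_{n-1}}` (all distinct), `p` and `q`
are not joined by an edge, `c₀, …, c_{n-1}` is an `n`-cycle in the 1-skeleton, and
the 2-simplices of `L` are exactly the sets `{p, cᵢ, cᵢ₊₁}` and `{q, cᵢ, cᵢ₊₁}`
for `i` mod `n`. -/
def IsSuspensionCycle (L : S2Triangulation V) {n : ℕ} (p q : V) (c : ZMod n → V) :
    Prop :=
  p ≠ q ∧ Function.Injective c ∧ (∀ i, p ≠ c i) ∧ (∀ i, q ≠ c i) ∧
  (∀ v : V, v = p ∨ v = q ∨ ∃ i, v = c i) ∧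
  ¬ L.Adj p q ∧ (∀ i, L.Adj (c i) (c (i + 1))) ∧
  (∀ f : Finset V, f ∈ L.faces ↔
    ∃ i, f = {p, c i, c (i + 1)} ∨ f = {q, c i, c (i + 1)})

/-- `L` is the suspension of an `n`-gon. -/
def IsSuspensionOfNGon (L : S2Triangulation V) (n : ℕ) : Prop :=
  ∃ (p q : V) (c : ZMod n → V), IsSuspensionCycle L p q c

end S2Triangulation

section Helpers

open S2Triangulation

variable {V : Type} [Fintype V] [DecidableEq V]

lemma adj_symm {L : S2Triangulation V} {u w : V} (h : L.Adj u w) : L.Adj w u := by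
  obtain ⟨hne, f, hf, hu, hw⟩ := h
  exact ⟨hne.symm, f, hf, hw, hu⟩

lemma face_decomp (L : S2Triangulation V) (f : Finset V) (hf : f ∈ L.faces)
    (x : V) (hx : x ∈ f) :
    ∃ u w, x ≠ u ∧ x ≠ w ∧ u ≠ w ∧ f = {x, u, w} := by
  obtain ⟨a, b, c, hab, hac, hbc, rfl⟩ :=
    Finset.card_eq_three.mp (L.card_eq_three _ hf)
  simp only [Finset.mem_insert, Finset.mem_singleton] at hx
  rcases hx with rfl | rfl | rfl
  · exact ⟨b, c, hab, hac, hbc, rfl⟩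
  · exact ⟨a, c, hab.symm, hbc, hac, by ext z; simp; tauto⟩
  · exact ⟨a, b, hac.symm, hbc.symm, hab, by ext z; simp; tauto⟩

lemma two_faces (L : S2Triangulation V) {x y : V} (hxy : x ≠ y) {F1 F2 : Finset V}
    (h1 : F1 ∈ L.faces) (h2 : F2 ∈ L.faces) (hne : F1 ≠ F2)
    (hx1 : x ∈ F1) (hy1 : y ∈ F1) (hx2 : x ∈ F2) (hy2 : y ∈ F2) :
    ∀ f ∈ L.faces, x ∈ f → y ∈ f → f = F1 ∨ f = F2 := by
  have hsub1 : ({x, y} : Finset V) ⊆ F1 := by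
    intro z hz; simp only [Finset.mem_insert, Finset.mem_singleton] at hz
    rcases hz with rfl | rfl <;> assumption
  have hsub2 : ({x, y} : Finset V) ⊆ F2 := by
    intro z hz; simp only [Finset.mem_insert, Finset.mem_singleton] at hz
    rcases hz with rfl | rfl <;> assumption
  have hcard : ({x, y} : Finset V).card = 2 := Finset.card_pair hxy
  have h2f := L.edge_two_faces {x, y} hcard ⟨F1, h1, hsub1⟩
  have hF1S : F1 ∈ L.faces.filter (fun f => ({x, y} : Finset V) ⊆ f) :=
    Finset.mem_filter.mpr ⟨h1, hsub1⟩
  have hF2S : F2 ∈ L.faces.filter (fun f => ({x, y} : Finset V) ⊆ f) :=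
    Finset.mem_filter.mpr ⟨h2, hsub2⟩
  have hSeq : L.faces.filter (fun f => ({x, y} : Finset V) ⊆ f) = {F1, F2} := by
    apply (Finset.eq_of_subset_of_card_le ?_ ?_).symm
    · intro g hg; simp only [Finset.mem_insert, Finset.mem_singleton] at hg
      rcases hg with rfl | rfl <;> assumption
    · rw [h2f, Finset.card_pair hne]
  intro f hf hxf hyf
  have hfS : f ∈ L.faces.filter (fun f => ({x, y} : Finset V) ⊆ f) := by
    refine Finset.mem_filter.mpr ⟨hf, ?_⟩
    intro z hz; simp only [Finset.mem_insert, Finset.mem_singleton] at hz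
    rcases hz with rfl | rfl <;> assumption
  rw [hSeq] at hfS
  simpa using hfS

lemma faces_at (L : S2Triangulation V) (x : V) (K : Finset V) (F : Finset (Finset V))
    (hFsub : ∀ f ∈ F, f ∈ L.faces)
    (hxK : x ∉ K)
    (hvert : ∀ f ∈ F, f ⊆ insert x K)
    (hcover : ∀ k ∈ K, ∃ F1, F1 ∈ F ∧ ∃ F2, F2 ∈ F ∧ F1 ≠ F2 ∧
      x ∈ F1 ∧ k ∈ F1 ∧ x ∈ F2 ∧ k ∈ F2)
    (k0 : V) (hk0 : k0 ∈ K) :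
    ∀ f ∈ L.faces, x ∈ f → f ∈ F := by
  have step : ∀ a b : V, b ∈ K → ({x, a, b} : Finset V) ∈ L.faces →
      a ∈ K ∧ ({x, a, b} : Finset V) ∈ F := by
    intro a b hbK hg
    obtain ⟨F1, hF1, F2, hF2, hne, hx1, hb1, hx2, hb2⟩ := hcover b hbK
    have hxb : x ≠ b := fun h => hxK (h ▸ hbK)
    have hcases := two_faces L hxb (hFsub _ hF1) (hFsub _ hF2) hne hx1 hb1 hx2 hb2
      _ hg (by simp) (by simp)
    have hgF : ({x, a, b} : Finset V) ∈ F := by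
      rcases hcases with h | h
      · rw [h]; exact hF1
      · rw [h]; exact hF2
    have hax : a ≠ x := by
      intro h; subst h
      have h3 := L.card_eq_three _ hg
      rw [show ({a, a, b} : Finset V) = {a, b} from by simp] at h3
      have := Finset.card_insert_le a ({b} : Finset V)
      simp at this; omega
    have haK : a ∈ K := by
      have hm := hvert _ hgF (show a ∈ ({x, a, b} : Finset V) by simp)
      simp only [Finset.mem_insert] at hm
      rcases hm with h | h
      · exact absurd h hax
      · exact h
    exact ⟨haK, hgF⟩
  have hAdjk0 : L.Adj x k0 := by
    obtain ⟨F1, hF1, F2, hF2, hne, hx1, hb1, hx2, hb2⟩ := hcover k0 hk0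
    exact ⟨fun h => hxK (h ▸ hk0), F1, hFsub _ hF1, hx1, hb1⟩
  have key0 : ∀ u', Relation.ReflTransGen
      (fun a b : V => a ≠ b ∧ ({x, a, b} : Finset V) ∈ L.faces) k0 u' → u' ∈ K := by
    intro u' hpath
    induction hpath with
    | refl => exact hk0
    | @tail b c _ hbc ih =>
      obtain ⟨hbcne, hbcf⟩ := hbc
      have hswap : ({x, c, b} : Finset V) = {x, b, c} := by ext z; simp; tauto
      exact (step c b ih (by rwa [hswap])).1
  intro f hf hxf
  obtain ⟨u, w, hxu, hxw, huw, rfl⟩ := face_decomp L f hf x hxf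
  have hadju : L.Adj x u := ⟨hxu, {x, u, w}, hf, by simp, by simp⟩
  have hadjw : L.Adj x w := ⟨hxw, {x, u, w}, hf, by simp, by simp⟩
  have huK : u ∈ K := key0 u (L.link_connected x k0 u hAdjk0 hadju)
  have hwK : w ∈ K := key0 w (L.link_connected x k0 w hAdjk0 hadjw)
  exact (step u w hwK hf).2

end Helpers

section Susp

open S2Triangulation

variable {V : Type} [Fintype V] [DecidableEq V]

lemma susp3 (L : S2Triangulation V) (p q a b d : V)
    (hpq : p ≠ q) (hab : a ≠ b) (had : a ≠ d) (hbd : b ≠ d)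
    (hpa : p ≠ a) (hpb : p ≠ b) (hpd : p ≠ d)
    (hqa : q ≠ a) (hqb : q ≠ b) (hqd : q ≠ d)
    (htot : ∀ v : V, v = p ∨ v = q ∨ v = a ∨ v = b ∨ v = d)
    (hnadj : ¬ L.Adj p q)
    (h1 : L.Adj a b) (h2 : L.Adj b d) (h3 : L.Adj d a)
    (hfaces : ∀ f : Finset V, f ∈ L.faces ↔
      (f = {p, a, b} ∨ f = {p, b, d} ∨ f = {p, d, a} ∨
       f = {q, a, b} ∨ f = {q, b, d} ∨ f = {q, d, a})) :
    IsSuspensionOfNGon L 3 := by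
  classical
  set c : ZMod 3 → V := fun i => if i = 0 then a else if i = 1 then b else d with hc
  have hc0 : c 0 = a := by rw [hc]; simp
  have hc1 : c 1 = b := by rw [hc]; simp only []; rw [if_neg (by decide)]; simp
  have hc2 : c 2 = d := by rw [hc]; simp only []; rw [if_neg (by decide), if_neg (by decide)]
  have hicases : ∀ i : ZMod 3, i = 0 ∨ i = 1 ∨ i = 2 := by decide
  have hcval : ∀ i : ZMod 3, c i = a ∨ c i = b ∨ c i = d := by
    intro i; rcases hicases i with rfl | rfl | rfl <;> simp [hc0, hc1, hc2]
  have e01 : (0 + 1 : ZMod 3) = 1 := by decide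
  have e12 : (1 + 1 : ZMod 3) = 2 := by decide
  have e20 : (2 + 1 : ZMod 3) = 0 := by decide
  refine ⟨p, q, c, hpq, ?_, ?_, ?_, ?_, hnadj, ?_, ?_⟩
  · intro i j hij
    rcases hicases i with rfl | rfl | rfl <;> rcases hicases j with rfl | rfl | rfl <;>
      simp_all [hc0, hc1, hc2]
  · intro i; rcases hcval i with h | h | h <;> rw [h] <;> assumption
  · intro i; rcases hcval i with h | h | h <;> rw [h] <;> assumption
  · intro v
    rcases htot v with rfl | rfl | rfl | rfl | rfl
    · exact Or.inl rfl
    · exact Or.inr (Or.inl rfl)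
    · exact Or.inr (Or.inr ⟨0, hc0.symm⟩)
    · exact Or.inr (Or.inr ⟨1, hc1.symm⟩)
    · exact Or.inr (Or.inr ⟨2, hc2.symm⟩)
  · intro i
    rcases hicases i with rfl | rfl | rfl
    · rw [e01, hc0, hc1]; exact h1
    · rw [e12, hc1, hc2]; exact h2
    · rw [e20, hc2, hc0]; exact h3
  · intro f
    rw [hfaces f]
    constructor
    · rintro (rfl | rfl | rfl | rfl | rfl | rfl)
      · exact ⟨0, Or.inl (by rw [e01, hc0, hc1])⟩
      · exact ⟨1, Or.inl (by rw [e12, hc1, hc2])⟩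
      · exact ⟨2, Or.inl (by rw [e20, hc2, hc0])⟩
      · exact ⟨0, Or.inr (by rw [e01, hc0, hc1])⟩
      · exact ⟨1, Or.inr (by rw [e12, hc1, hc2])⟩
      · exact ⟨2, Or.inr (by rw [e20, hc2, hc0])⟩
    · rintro ⟨i, h | h⟩ <;> rcases hicases i with rfl | rfl | rfl <;>
        simp only [e01, e12, e20, hc0, hc1, hc2] at h <;> tauto

end Susp

section Main

open S2Triangulation

variable {V : Type} [Fintype V] [DecidableEq V]

lemma tri_rotr (a b c : V) : ({a, b, c} : Finset V) = {c, a, b} := by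
  ext z; simp; tauto

lemma tri_rotl (a b c : V) : ({a, b, c} : Finset V) = {b, c, a} := by
  ext z; simp; tauto

lemma tri_rev (a b c : V) : ({a, b, c} : Finset V) = {c, b, a} := by
  ext z; simp; tauto

lemma tri_swap12 (a b c : V) : ({a, b, c} : Finset V) = {b, a, c} := by
  ext z; simp; tauto

lemma tri_swap23 (a b c : V) : ({a, b, c} : Finset V) = {a, c, b} := by
  ext z; simp; tauto

lemma quad_rot (a b c d : V) : ({a, b, c, d} : Finset V) = {b, c, d, a} := by
  ext z; simp; tauto

lemma rot_cycle {L : S2Triangulation V} {M : EdgeLabeling L} {s s0 s1 s2 s3 : V}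
    (hs : Is4EuclideanCycle L M s s0 s1 s2 s3) :
    Is4EuclideanCycle L M s s1 s2 s3 s0 := by
  obtain ⟨h01, h02, h03, h12, h13, h23, hlink, hA01, hA12, hA23, hA30,
    hX02, hX13, hm01, hm12, hm23, hm30⟩ := hs
  refine ⟨h12, h13, h01.symm, h23, h02.symm, h03.symm, ?_, hA12, hA23, hA30, hA01, hX13, ?_,
    hm12, hm23, hm30, hm01⟩
  · rw [hlink]; exact quad_rot s0 s1 s2 s3
  · rw [tri_swap23 s s2 s0]; exact hX02

set_option maxHeartbeats 1000000 in
lemma not_adj_diag (L : S2Triangulation V) (M : EdgeLabeling L) (hflag : MetricFlag L M)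
    (hsusp : ¬ IsSuspensionOfNGon L 3) (s s0 s1 s2 s3 : V)
    (hs : Is4EuclideanCycle L M s s0 s1 s2 s3) : ¬ L.Adj s0 s2 := by
  intro h02
  obtain ⟨h01', h02', h03', h12', h13', h23', hlink, hA01, hA12, hA23, hA30,
    hX02, hX13, hm01, hm12, hm23, hm30⟩ := hs
  have hls : ∀ u, u ∈ ({s0, s1, s2, s3} : Finset V) → L.Adj s u := by
    intro u hu
    have hu' : u ∈ L.linkVerts s := by rw [hlink]; exact hu
    simp only [S2Triangulation.linkVerts, Finset.mem_filter] at hu'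
    exact hu'.2
  have as0 : L.Adj s s0 := hls s0 (by simp)
  have as1 : L.Adj s s1 := hls s1 (by simp)
  have as2 : L.Adj s s2 := hls s2 (by simp)
  have as3 : L.Adj s s3 := hls s3 (by simp)
  -- all directed inequalities
  have n_s_s0 : s ≠ s0 := as0.1
  have n_s_s1 : s ≠ s1 := as1.1
  have n_s_s2 : s ≠ s2 := as2.1
  have n_s_s3 : s ≠ s3 := as3.1
  have n_s0_s : s0 ≠ s := n_s_s0.symm
  have n_s1_s : s1 ≠ s := n_s_s1.symm
  have n_s2_s : s2 ≠ s := n_s_s2.symm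
  have n_s3_s : s3 ≠ s := n_s_s3.symm
  have n_s1_s0 : s1 ≠ s0 := h01'.symm
  have n_s2_s0 : s2 ≠ s0 := h02'.symm
  have n_s3_s0 : s3 ≠ s0 := h03'.symm
  have n_s2_s1 : s2 ≠ s1 := h12'.symm
  have n_s3_s1 : s3 ≠ s1 := h13'.symm
  have n_s3_s2 : s3 ≠ s2 := h23'.symm
  -- adjacency around the cycle
  have a01 : L.Adj s0 s1 := ⟨h01', {s, s0, s1}, hA01, by simp, by simp⟩
  have a12 : L.Adj s1 s2 := ⟨h12', {s, s1, s2}, hA12, by simp, by simp⟩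
  have a23 : L.Adj s2 s3 := ⟨h23', {s, s2, s3}, hA23, by simp, by simp⟩
  have a30 : L.Adj s3 s0 := ⟨n_s3_s0, {s, s3, s0}, hA30, by simp, by simp⟩
  -- the two extra faces
  have hB012 : ({s0, s1, s2} : Finset V) ∈ L.faces := by
    rw [hflag s0 s1 s2 a01 a12 (adj_symm h02), hm01, hm12]
    have h2 : 2 ≤ M.m s2 s0 := M.two_le _ _ (adj_symm h02)
    have hpos : (0:ℚ) < (M.m s2 s0 : ℚ)⁻¹ := by
      apply inv_pos.mpr; exact_mod_cast lt_of_lt_of_le (by norm_num) h2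
    push_cast
    linarith
  have hB023 : ({s0, s2, s3} : Finset V) ∈ L.faces := by
    have h := hflag s2 s3 s0 a23 a30 h02
    rw [tri_rotr s2 s3 s0] at h
    rw [h, hm23, hm30]
    have h2 : 2 ≤ M.m s0 s2 := M.two_le _ _ h02
    have hpos : (0:ℚ) < (M.m s0 s2 : ℚ)⁻¹ := by
      apply inv_pos.mpr; exact_mod_cast lt_of_lt_of_le (by norm_num) h2
    push_cast
    linarith
  -- distinctness of the six faces where needed
  have fne : ∀ (y : V) (f g : Finset V), y ∈ f → y ∉ g → f ≠ g :=
    fun y f g hy hy' h => hy' (h ▸ hy)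
  have dA01A30 : ({s, s0, s1} : Finset V) ≠ {s, s3, s0} :=
    fne s1 _ _ (by simp) (by simp [n_s1_s, n_s1_s0, h13'])
  have dA01A12 : ({s, s0, s1} : Finset V) ≠ {s, s1, s2} :=
    fne s0 _ _ (by simp) (by simp [n_s0_s, h01', h02'])
  have dA12A23 : ({s, s1, s2} : Finset V) ≠ {s, s2, s3} :=
    fne s1 _ _ (by simp) (by simp [n_s1_s, h12', h13'])
  have dA23A30 : ({s, s2, s3} : Finset V) ≠ {s, s3, s0} :=
    fne s2 _ _ (by simp) (by simp [n_s2_s, n_s2_s0, h23'])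
  have dA01B012 : ({s, s0, s1} : Finset V) ≠ {s0, s1, s2} :=
    fne s _ _ (by simp) (by simp [n_s_s0, n_s_s1, n_s_s2])
  have dA12B012 : ({s, s1, s2} : Finset V) ≠ {s0, s1, s2} :=
    fne s _ _ (by simp) (by simp [n_s_s0, n_s_s1, n_s_s2])
  have dB012B023 : ({s0, s1, s2} : Finset V) ≠ {s0, s2, s3} :=
    fne s1 _ _ (by simp) (by simp [n_s1_s0, h12', h13'])
  have dA30B023 : ({s, s3, s0} : Finset V) ≠ {s0, s2, s3} :=
    fne s _ _ (by simp) (by simp [n_s_s0, n_s_s2, n_s_s3])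
  have dA23B023 : ({s, s2, s3} : Finset V) ≠ {s0, s2, s3} :=
    fne s _ _ (by simp) (by simp [n_s_s0, n_s_s2, n_s_s3])
  -- classification of faces at each of the five vertices
  have hfs : ∀ f ∈ L.faces, s ∈ f →
      f ∈ ({{s, s0, s1}, {s, s1, s2}, {s, s2, s3}, {s, s3, s0}} : Finset (Finset V)) := by
    refine faces_at L s {s0, s1, s2, s3} _ ?_ ?_ ?_ ?_ s0 (by simp)
    · intro f hf
      simp only [Finset.mem_insert, Finset.mem_singleton] at hf
      rcases hf with rfl | rfl | rfl | rfl
      exacts [hA01, hA12, hA23, hA30]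
    · simp only [Finset.mem_insert, Finset.mem_singleton]
      push_neg
      exact ⟨n_s_s0, n_s_s1, n_s_s2, n_s_s3⟩
    · intro f hf
      simp only [Finset.mem_insert, Finset.mem_singleton] at hf
      rcases hf with rfl | rfl | rfl | rfl <;>
        (intro z hz; simp only [Finset.mem_insert, Finset.mem_singleton] at hz ⊢; rcases hz with rfl | rfl | rfl <;> simp)
    · intro k hk
      simp only [Finset.mem_insert, Finset.mem_singleton] at hk
      rcases hk with h | h | h | h <;> rw [h]
      · exact ⟨{s, s0, s1}, by simp, {s, s3, s0}, by simp, dA01A30,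
          by simp, by simp, by simp, by simp⟩
      · exact ⟨{s, s0, s1}, by simp, {s, s1, s2}, by simp, dA01A12,
          by simp, by simp, by simp, by simp⟩
      · exact ⟨{s, s1, s2}, by simp, {s, s2, s3}, by simp, dA12A23,
          by simp, by simp, by simp, by simp⟩
      · exact ⟨{s, s2, s3}, by simp, {s, s3, s0}, by simp, dA23A30,
          by simp, by simp, by simp, by simp⟩
  have hfs0 : ∀ f ∈ L.faces, s0 ∈ f →
      f ∈ ({{s, s0, s1}, {s, s3, s0}, {s0, s1, s2}, {s0, s2, s3}} : Finset (Finset V)) := by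
    refine faces_at L s0 {s, s1, s2, s3} _ ?_ ?_ ?_ ?_ s (by simp)
    · intro f hf
      simp only [Finset.mem_insert, Finset.mem_singleton] at hf
      rcases hf with rfl | rfl | rfl | rfl
      exacts [hA01, hA30, hB012, hB023]
    · simp only [Finset.mem_insert, Finset.mem_singleton]
      push_neg
      exact ⟨n_s0_s, h01', h02', h03'⟩
    · intro f hf
      simp only [Finset.mem_insert, Finset.mem_singleton] at hf
      rcases hf with rfl | rfl | rfl | rfl <;>
        (intro z hz; simp only [Finset.mem_insert, Finset.mem_singleton] at hz ⊢; rcases hz with rfl | rfl | rfl <;> simp)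
    · intro k hk
      simp only [Finset.mem_insert, Finset.mem_singleton] at hk
      rcases hk with h | h | h | h <;> rw [h]
      · exact ⟨{s, s0, s1}, by simp, {s, s3, s0}, by simp, dA01A30,
          by simp, by simp, by simp, by simp⟩
      · exact ⟨{s, s0, s1}, by simp, {s0, s1, s2}, by simp, dA01B012,
          by simp, by simp, by simp, by simp⟩
      · exact ⟨{s0, s1, s2}, by simp, {s0, s2, s3}, by simp, dB012B023,
          by simp, by simp, by simp, by simp⟩
      · exact ⟨{s, s3, s0}, by simp, {s0, s2, s3}, by simp, dA30B023,
          by simp, by simp, by simp, by simp⟩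
  have hfs1 : ∀ f ∈ L.faces, s1 ∈ f →
      f ∈ ({{s, s0, s1}, {s, s1, s2}, {s0, s1, s2}} : Finset (Finset V)) := by
    refine faces_at L s1 {s, s0, s2} _ ?_ ?_ ?_ ?_ s (by simp)
    · intro f hf
      simp only [Finset.mem_insert, Finset.mem_singleton] at hf
      rcases hf with rfl | rfl | rfl
      exacts [hA01, hA12, hB012]
    · simp only [Finset.mem_insert, Finset.mem_singleton]
      push_neg
      exact ⟨n_s1_s, n_s1_s0, h12'⟩
    · intro f hf
      simp only [Finset.mem_insert, Finset.mem_singleton] at hf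
      rcases hf with rfl | rfl | rfl <;>
        (intro z hz; simp only [Finset.mem_insert, Finset.mem_singleton] at hz ⊢; rcases hz with rfl | rfl | rfl <;> simp)
    · intro k hk
      simp only [Finset.mem_insert, Finset.mem_singleton] at hk
      rcases hk with h | h | h <;> rw [h]
      · exact ⟨{s, s0, s1}, by simp, {s, s1, s2}, by simp, dA01A12,
          by simp, by simp, by simp, by simp⟩
      · exact ⟨{s, s0, s1}, by simp, {s0, s1, s2}, by simp, dA01B012,
          by simp, by simp, by simp, by simp⟩
      · exact ⟨{s, s1, s2}, by simp, {s0, s1, s2}, by simp, dA12B012,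
          by simp, by simp, by simp, by simp⟩
  have hfs2 : ∀ f ∈ L.faces, s2 ∈ f →
      f ∈ ({{s, s1, s2}, {s, s2, s3}, {s0, s1, s2}, {s0, s2, s3}} : Finset (Finset V)) := by
    refine faces_at L s2 {s, s0, s1, s3} _ ?_ ?_ ?_ ?_ s (by simp)
    · intro f hf
      simp only [Finset.mem_insert, Finset.mem_singleton] at hf
      rcases hf with rfl | rfl | rfl | rfl
      exacts [hA12, hA23, hB012, hB023]
    · simp only [Finset.mem_insert, Finset.mem_singleton]
      push_neg
      exact ⟨n_s2_s, n_s2_s0, n_s2_s1, h23'⟩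
    · intro f hf
      simp only [Finset.mem_insert, Finset.mem_singleton] at hf
      rcases hf with rfl | rfl | rfl | rfl <;>
        (intro z hz; simp only [Finset.mem_insert, Finset.mem_singleton] at hz ⊢; rcases hz with rfl | rfl | rfl <;> simp)
    · intro k hk
      simp only [Finset.mem_insert, Finset.mem_singleton] at hk
      rcases hk with h | h | h | h <;> rw [h]
      · exact ⟨{s, s1, s2}, by simp, {s, s2, s3}, by simp, dA12A23,
          by simp, by simp, by simp, by simp⟩
      · exact ⟨{s0, s1, s2}, by simp, {s0, s2, s3}, by simp, dB012B023,
          by simp, by simp, by simp, by simp⟩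
      · exact ⟨{s, s1, s2}, by simp, {s0, s1, s2}, by simp, dA12B012,
          by simp, by simp, by simp, by simp⟩
      · exact ⟨{s, s2, s3}, by simp, {s0, s2, s3}, by simp, dA23B023,
          by simp, by simp, by simp, by simp⟩
  have hfs3 : ∀ f ∈ L.faces, s3 ∈ f →
      f ∈ ({{s, s2, s3}, {s, s3, s0}, {s0, s2, s3}} : Finset (Finset V)) := by
    refine faces_at L s3 {s, s0, s2} _ ?_ ?_ ?_ ?_ s (by simp)
    · intro f hf
      simp only [Finset.mem_insert, Finset.mem_singleton] at hf
      rcases hf with rfl | rfl | rfl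
      exacts [hA23, hA30, hB023]
    · simp only [Finset.mem_insert, Finset.mem_singleton]
      push_neg
      exact ⟨n_s3_s, n_s3_s0, n_s3_s2⟩
    · intro f hf
      simp only [Finset.mem_insert, Finset.mem_singleton] at hf
      rcases hf with rfl | rfl | rfl <;>
        (intro z hz; simp only [Finset.mem_insert, Finset.mem_singleton] at hz ⊢; rcases hz with rfl | rfl | rfl <;> simp)
    · intro k hk
      simp only [Finset.mem_insert, Finset.mem_singleton] at hk
      rcases hk with h | h | h <;> rw [h]
      · exact ⟨{s, s2, s3}, by simp, {s, s3, s0}, by simp, dA23A30,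
          by simp, by simp, by simp, by simp⟩
      · exact ⟨{s, s3, s0}, by simp, {s0, s2, s3}, by simp, dA30B023,
          by simp, by simp, by simp, by simp⟩
      · exact ⟨{s, s2, s3}, by simp, {s0, s2, s3}, by simp, dA23B023,
          by simp, by simp, by simp, by simp⟩
  -- classification of faces containing a classified vertex
  have hsix : ∀ f ∈ L.faces, ∀ b ∈ f,
      (b = s ∨ b = s0 ∨ b = s1 ∨ b = s2 ∨ b = s3) →
      (f = {s, s0, s1} ∨ f = {s, s1, s2} ∨ f = {s, s2, s3} ∨
       f = {s, s3, s0} ∨ f = {s0, s1, s2} ∨ f = {s0, s2, s3}) := by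
    intro f hf b hb hcase
    rcases hcase with rfl | rfl | rfl | rfl | rfl
    · have h := hfs f hf hb
      simp only [Finset.mem_insert, Finset.mem_singleton] at h
      rcases h with h | h | h | h
      exacts [Or.inl h, Or.inr (Or.inl h), Or.inr (Or.inr (Or.inl h)),
        Or.inr (Or.inr (Or.inr (Or.inl h)))]
    · have h := hfs0 f hf hb
      simp only [Finset.mem_insert, Finset.mem_singleton] at h
      rcases h with h | h | h | h
      exacts [Or.inl h, Or.inr (Or.inr (Or.inr (Or.inl h))),
        Or.inr (Or.inr (Or.inr (Or.inr (Or.inl h)))),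
        Or.inr (Or.inr (Or.inr (Or.inr (Or.inr h))))]
    · have h := hfs1 f hf hb
      simp only [Finset.mem_insert, Finset.mem_singleton] at h
      rcases h with h | h | h
      exacts [Or.inl h, Or.inr (Or.inl h),
        Or.inr (Or.inr (Or.inr (Or.inr (Or.inl h))))]
    · have h := hfs2 f hf hb
      simp only [Finset.mem_insert, Finset.mem_singleton] at h
      rcases h with h | h | h | h
      exacts [Or.inr (Or.inl h), Or.inr (Or.inr (Or.inl h)),
        Or.inr (Or.inr (Or.inr (Or.inr (Or.inl h)))),
        Or.inr (Or.inr (Or.inr (Or.inr (Or.inr h))))]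
    · have h := hfs3 f hf hb
      simp only [Finset.mem_insert, Finset.mem_singleton] at h
      rcases h with h | h | h
      exacts [Or.inr (Or.inr (Or.inl h)), Or.inr (Or.inr (Or.inr (Or.inl h))),
        Or.inr (Or.inr (Or.inr (Or.inr (Or.inr h))))]
  -- every vertex is one of the five
  have hvtx : ∀ v : V, v = s ∨ v = s0 ∨ v = s1 ∨ v = s2 ∨ v = s3 := by
    have key : ∀ v, Relation.ReflTransGen
        (fun a b : V => a ≠ b ∧ ∃ f ∈ L.faces, a ∈ f ∧ b ∈ f) s v →
        (v = s ∨ v = s0 ∨ v = s1 ∨ v = s2 ∨ v = s3) := by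
      intro v hpath
      induction hpath with
      | refl => exact Or.inl rfl
      | @tail b cc _ hbc ih =>
        obtain ⟨hne, f, hf, hbf, hcf⟩ := hbc
        rcases hsix f hf b hbf ih with rfl | rfl | rfl | rfl | rfl | rfl
        · simp only [Finset.mem_insert, Finset.mem_singleton] at hcf
          rcases hcf with h | h | h
          exacts [Or.inl h, Or.inr (Or.inl h), Or.inr (Or.inr (Or.inl h))]
        · simp only [Finset.mem_insert, Finset.mem_singleton] at hcf
          rcases hcf with h | h | h
          exacts [Or.inl h, Or.inr (Or.inr (Or.inl h)),
            Or.inr (Or.inr (Or.inr (Or.inl h)))]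
        · simp only [Finset.mem_insert, Finset.mem_singleton] at hcf
          rcases hcf with h | h | h
          exacts [Or.inl h, Or.inr (Or.inr (Or.inr (Or.inl h))),
            Or.inr (Or.inr (Or.inr (Or.inr h)))]
        · simp only [Finset.mem_insert, Finset.mem_singleton] at hcf
          rcases hcf with h | h | h
          exacts [Or.inl h, Or.inr (Or.inr (Or.inr (Or.inr h))), Or.inr (Or.inl h)]
        · simp only [Finset.mem_insert, Finset.mem_singleton] at hcf
          rcases hcf with h | h | h
          exacts [Or.inr (Or.inl h), Or.inr (Or.inr (Or.inl h)),
            Or.inr (Or.inr (Or.inr (Or.inl h)))]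
        · simp only [Finset.mem_insert, Finset.mem_singleton] at hcf
          rcases hcf with h | h | h
          exacts [Or.inr (Or.inl h), Or.inr (Or.inr (Or.inr (Or.inl h))),
            Or.inr (Or.inr (Or.inr (Or.inr h)))]
    intro v; exact key v (L.conn s v)
  -- every face is one of the six
  have hfall : ∀ f ∈ L.faces, f = {s, s0, s1} ∨ f = {s, s1, s2} ∨ f = {s, s2, s3} ∨
      f = {s, s3, s0} ∨ f = {s0, s1, s2} ∨ f = {s0, s2, s3} := by
    intro f hf
    have hpos : 0 < f.card := by rw [L.card_eq_three f hf]; norm_num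
    obtain ⟨v, hv⟩ := Finset.card_pos.mp hpos
    exact hsix f hf v hv (hvtx v)
  -- L is the suspension of a 3-gon : contradiction
  apply hsusp
  refine susp3 L s1 s3 s0 s2 s h13' h02' n_s0_s n_s2_s n_s1_s0 h12' n_s1_s
    n_s3_s0 n_s3_s2 n_s3_s ?_ ?_ h02 (adj_symm as2) as0 ?_
  · intro v
    rcases hvtx v with h | h | h | h | h
    exacts [Or.inr (Or.inr (Or.inr (Or.inr h))), Or.inr (Or.inr (Or.inl h)),
      Or.inl h, Or.inr (Or.inr (Or.inr (Or.inl h))), Or.inr (Or.inl h)]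
  · rintro ⟨hne, f, hf, h1f, h3f⟩
    rcases hfall f hf with rfl | rfl | rfl | rfl | rfl | rfl
    · simp only [Finset.mem_insert, Finset.mem_singleton] at h3f
      rcases h3f with h | h | h
      exacts [n_s3_s h, n_s3_s0 h, n_s3_s1 h]
    · simp only [Finset.mem_insert, Finset.mem_singleton] at h3f
      rcases h3f with h | h | h
      exacts [n_s3_s h, n_s3_s1 h, n_s3_s2 h]
    · simp only [Finset.mem_insert, Finset.mem_singleton] at h1f
      rcases h1f with h | h | h
      exacts [n_s1_s h, h12' h, h13' h]
    · simp only [Finset.mem_insert, Finset.mem_singleton] at h1f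
      rcases h1f with h | h | h
      exacts [n_s1_s h, h13' h, n_s1_s0 h]
    · simp only [Finset.mem_insert, Finset.mem_singleton] at h3f
      rcases h3f with h | h | h
      exacts [n_s3_s0 h, n_s3_s1 h, n_s3_s2 h]
    · simp only [Finset.mem_insert, Finset.mem_singleton] at h1f
      rcases h1f with h | h | h
      exacts [n_s1_s0 h, h12' h, h13' h]
  · intro f
    constructor
    · intro hf
      rcases hfall f hf with rfl | rfl | rfl | rfl | rfl | rfl
      · exact Or.inr (Or.inr (Or.inl (tri_rotr s s0 s1)))
      · exact Or.inr (Or.inl (tri_rotl s s1 s2))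
      · exact Or.inr (Or.inr (Or.inr (Or.inr (Or.inl (tri_rev s s2 s3)))))
      · exact Or.inr (Or.inr (Or.inr (Or.inr (Or.inr (tri_swap12 s s3 s0)))))
      · exact Or.inl (tri_swap12 s0 s1 s2)
      · exact Or.inr (Or.inr (Or.inr (Or.inl (tri_rotr s0 s2 s3))))
    · rintro (rfl | rfl | rfl | rfl | rfl | rfl)
      · rw [tri_swap12 s1 s0 s2]; exact hB012
      · rw [tri_rotr s1 s2 s]; exact hA12
      · rw [tri_rotl s1 s s0]; exact hA01
      · rw [tri_rotl s3 s0 s2]; exact hB023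
      · rw [tri_rev s3 s2 s]; exact hA23
      · rw [tri_swap12 s3 s s0]; exact hA30

end Main

open S2Triangulation in
/-- If `L` is a metric flag edge-labeled triangulation of `S²`
which is not the suspension of a 3-gon, and `s` is a 4-Euclidean vertex of `L` with
link 4-cycle `s₀, s₁, s₂, s₃`, then the link `L_s` and the star `St_L(s)` are full
subcomplexes of `L`; in particular neither `{s₀, s₂}` nor `{s₁, s₃}` is an edge of
`L`, and no 2-simplex of `L` has all its vertices among `s₀, s₁, s₂, s₃`. -/
theorem four_euclidean_link_and_star_full {V : Type} [Fintype V] [DecidableEq V]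
    (L : S2Triangulation V) (M : EdgeLabeling L) (hflag : MetricFlag L M)
    (hsusp : ¬ IsSuspensionOfNGon L 3)
    (s s0 s1 s2 s3 : V) (hs : Is4EuclideanCycle L M s s0 s1 s2 s3) :
    ¬ L.Adj s0 s2 ∧ ¬ L.Adj s1 s3 ∧
      ∀ f ∈ L.faces, ¬ f ⊆ ({s0, s1, s2, s3} : Finset V) := by
  have h02 := not_adj_diag L M hflag hsusp s s0 s1 s2 s3 hs
  have h13 := not_adj_diag L M hflag hsusp s s1 s2 s3 s0 (rot_cycle hs)
  obtain ⟨h01', h02', h03', h12', h13', h23', hlink, hA01, hA12, hA23, hA30,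
    hX02, hX13, hm01, hm12, hm23, hm30⟩ := hs
  refine ⟨h02, h13, ?_⟩
  intro f hf hsub
  have hcf := L.card_eq_three f hf
  have hS : ({s0, s1, s2, s3} : Finset V).card = 4 := by
    rw [Finset.card_insert_of_notMem (by simp [h01', h02', h03']),
      Finset.card_insert_of_notMem (by simp [h12', h13']),
      Finset.card_insert_of_notMem (by simp [h23']), Finset.card_singleton]
  have hsd : (({s0, s1, s2, s3} : Finset V) \ f).card = 1 := by
    rw [Finset.card_sdiff_of_subset hsub, hS, hcf]
  obtain ⟨x, hx⟩ := Finset.card_eq_one.mp hsd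
  have hmem : ∀ y, y ∈ ({s0, s1, s2, s3} : Finset V) → y ∉ f → y = x := by
    intro y hy hyf
    have hy' : y ∈ ({s0, s1, s2, s3} : Finset V) \ f := Finset.mem_sdiff.mpr ⟨hy, hyf⟩
    rw [hx] at hy'
    simpa using hy'
  by_cases h0 : s0 ∈ f
  · by_cases h2 : s2 ∈ f
    · exact h02 ⟨h02', f, hf, h0, h2⟩
    · have hx2 := hmem s2 (by simp) h2
      have h1 : s1 ∈ f := by
        by_contra h1
        exact h12' ((hmem s1 (by simp) h1).trans hx2.symm)
      have h3 : s3 ∈ f := by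
        by_contra h3
        exact h23' (hx2.trans (hmem s3 (by simp) h3).symm)
      exact h13 ⟨h13', f, hf, h1, h3⟩
  · have hx0 := hmem s0 (by simp) h0
    have h1 : s1 ∈ f := by
      by_contra h1
      exact h01' (hx0.trans (hmem s1 (by simp) h1).symm)
    have h3 : s3 ∈ f := by
      by_contra h3
      exact h03' (hx0.trans (hmem s3 (by simp) h3).symm)
    exact h13 ⟨h13', f, hf, h1, h3⟩
end

section
/- Let L be a metric flag edge-labeled triangulation of S² and let s₀, s₁, s₂, s₃ be a 4-cycle in the 1-skeleton of L with m_{sᵢsᵢ₊₁} = 2 for all i (mod 4), and suppose this 4-cycle is not the boundary of the union of two 2-simplices of L sharing an edge. Then the 4-cycle is a full subcomplex of L: neither diagonal {s₀,s₂} nor {s₁,s₃} is an edge of L, and no 2-simplex of L has all its vertices among s₀, s₁, s₂, s₃. -/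
open Finset

open S2Triangulation in
/-- Let `L` be a metric flag edge-labeled triangulation of `S²` and
let `s₀, s₁, s₂, s₃` be a 4-cycle in the 1-skeleton of `L` with all four consecutive
labels equal to `2`, which is not the boundary of the union of two 2-simplices of `L`
sharing an edge.  Then the 4-cycle is a full subcomplex of `L`: neither diagonal
`{s₀, s₂}` nor `{s₁, s₃}` is an edge of `L`, and no 2-simplex of `L` has all its
vertices among `s₀, s₁, s₂, s₃`. -/
theorem euclidean_four_circuit_full {V : Type} [Fintype V] [DecidableEq V]
    (L : S2Triangulation V) (M : EdgeLabeling L) (hflag : MetricFlag L M)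
    (s0 s1 s2 s3 : V)
    (h02 : s0 ≠ s2) (h13 : s1 ≠ s3)
    (ha01 : L.Adj s0 s1) (ha12 : L.Adj s1 s2) (ha23 : L.Adj s2 s3) (ha30 : L.Adj s3 s0)
    (hm01 : M.m s0 s1 = 2) (hm12 : M.m s1 s2 = 2) (hm23 : M.m s2 s3 = 2)
    (hm30 : M.m s3 s0 = 2)
    (hnb : ¬ ((({s0, s1, s2} : Finset V) ∈ L.faces ∧
               ({s0, s2, s3} : Finset V) ∈ L.faces) ∨
              (({s1, s2, s3} : Finset V) ∈ L.faces ∧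
               ({s1, s3, s0} : Finset V) ∈ L.faces))) :
    ¬ L.Adj s0 s2 ∧ ¬ L.Adj s1 s3 ∧
      ∀ f ∈ L.faces, ¬ f ⊆ ({s0, s1, s2, s3} : Finset V) := by
  have symmAdj : ∀ u w : V, L.Adj u w → L.Adj w u := by
    rintro u w ⟨h, f, hf, hu, hw⟩; exact ⟨h.symm, f, hf, hw, hu⟩
  have key : ∀ a b c : V, L.Adj a b → L.Adj b c → L.Adj c a →
      M.m b c = 2 → M.m c a = 2 → ({a, b, c} : Finset V) ∈ L.faces := by
    intro a b c hab hbc hca m1 m2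
    rw [hflag a b c hab hbc hca, m1, m2]
    have h2 : 2 ≤ M.m a b := M.two_le a b hab
    have hpos : (0:ℚ) < ((M.m a b : ℚ))⁻¹ := by
      have : (0:ℚ) < (M.m a b : ℚ) := by exact_mod_cast Nat.lt_of_lt_of_le two_pos h2
      exact inv_pos.mpr this
    norm_num
    linarith
  have hn02 : ¬ L.Adj s0 s2 := by
    intro h
    have hA : ({s2, s0, s1} : Finset V) ∈ L.faces :=
      key s2 s0 s1 (symmAdj _ _ h) ha01 ha12 hm01 hm12
    have hB : ({s0, s2, s3} : Finset V) ∈ L.faces :=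
      key s0 s2 s3 h ha23 ha30 hm23 hm30
    have heq : ({s2, s0, s1} : Finset V) = {s0, s1, s2} := by
      ext x; simp; tauto
    exact hnb (Or.inl ⟨heq ▸ hA, hB⟩)
  have hn13 : ¬ L.Adj s1 s3 := by
    intro h
    have hA : ({s3, s1, s2} : Finset V) ∈ L.faces :=
      key s3 s1 s2 (symmAdj _ _ h) ha12 ha23 hm12 hm23
    have hB : ({s1, s3, s0} : Finset V) ∈ L.faces :=
      key s1 s3 s0 h ha30 ha01 hm30 hm01
    have heq : ({s3, s1, s2} : Finset V) = {s1, s2, s3} := by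
      ext x; simp; tauto
    exact hnb (Or.inr ⟨heq ▸ hA, hB⟩)
  refine ⟨hn02, hn13, ?_⟩
  intro f hf hsub
  have h3 := L.card_eq_three f hf
  have hdiag : (s0 ∈ f ∧ s2 ∈ f) ∨ (s1 ∈ f ∧ s3 ∈ f) := by
    by_contra hcon
    push_neg at hcon
    obtain ⟨hA, hB⟩ := hcon
    by_cases h0 : s0 ∈ f
    · have h2' : s2 ∉ f := hA h0
      by_cases h1 : s1 ∈ f
      · have h3' : s3 ∉ f := hB h1
        have hsub2 : f ⊆ ({s0, s1} : Finset V) := by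
          intro x hx
          have := hsub hx
          simp at this ⊢
          rcases this with h|h|h|h
          · exact Or.inl h
          · exact Or.inr h
          · exact absurd (h ▸ hx) h2'
          · exact absurd (h ▸ hx) h3'
        have := Finset.card_le_card hsub2
        have hle : ({s0, s1} : Finset V).card ≤ 2 :=
          (Finset.card_insert_le _ _).trans (by simp)
        omega
      · have hsub2 : f ⊆ ({s0, s3} : Finset V) := by
          intro x hx
          have := hsub hx
          simp at this ⊢
          rcases this with h|h|h|h
          · exact Or.inl h
          · exact absurd (h ▸ hx) h1
          · exact absurd (h ▸ hx) h2'
          · exact Or.inr h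
        have := Finset.card_le_card hsub2
        have hle : ({s0, s3} : Finset V).card ≤ 2 :=
          (Finset.card_insert_le _ _).trans (by simp)
        omega
    · by_cases h1 : s1 ∈ f
      · have h3' : s3 ∉ f := hB h1
        have hsub2 : f ⊆ ({s1, s2} : Finset V) := by
          intro x hx
          have := hsub hx
          simp at this ⊢
          rcases this with h|h|h|h
          · exact absurd (h ▸ hx) h0
          · exact Or.inl h
          · exact Or.inr h
          · exact absurd (h ▸ hx) h3'
        have := Finset.card_le_card hsub2
        have hle : ({s1, s2} : Finset V).card ≤ 2 :=
          (Finset.card_insert_le _ _).trans (by simp)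
        omega
      · have hsub2 : f ⊆ ({s2, s3} : Finset V) := by
          intro x hx
          have := hsub hx
          simp at this ⊢
          rcases this with h|h|h|h
          · exact absurd (h ▸ hx) h0
          · exact absurd (h ▸ hx) h1
          · exact Or.inl h
          · exact Or.inr h
        have := Finset.card_le_card hsub2
        have hle : ({s2, s3} : Finset V).card ≤ 2 :=
          (Finset.card_insert_le _ _).trans (by simp)
        omega
  rcases hdiag with ⟨hx, hy⟩ | ⟨hx, hy⟩
  · exact hn02 ⟨h02, f, hf, hx, hy⟩
  · exact hn13 ⟨h13, f, hf, hx, hy⟩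
end

section
/- Let L be a metric flag edge-labeled triangulation of S². Then no two 3-Euclidean vertices of L are joined by an edge of L. -/
open Finset

open S2Triangulation in
lemma face_of_link_pair' {V : Type} [Fintype V] [DecidableEq V]
    (L : S2Triangulation V) (M : EdgeLabeling L) {s a b : V}
    (h : Is3Euclidean L M s) (ha : L.Adj s a) (hb : L.Adj s b) (hab : a ≠ b) :
    ({s, a, b} : Finset V) ∈ L.faces := by
  obtain ⟨t0, t1, t2, h01, h12, h02, hlink, f01, f12, f20, -⟩ := h
  have ha' : a ∈ ({t0, t1, t2} : Finset V) := by
    rw [← hlink]; simp [S2Triangulation.linkVerts, ha]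
  have hb' : b ∈ ({t0, t1, t2} : Finset V) := by
    rw [← hlink]; simp [S2Triangulation.linkVerts, hb]
  simp only [Finset.mem_insert, Finset.mem_singleton] at ha' hb'
  have perm : ∀ x y z : V, ({x, y, z} : Finset V) = {x, z, y} := fun x y z => by
    ext w; simp; tauto
  rcases ha' with rfl | rfl | rfl <;> rcases hb' with rfl | rfl | rfl <;>
    first
      | exact absurd rfl hab
      | assumption
      | (rw [perm]; assumption)

open S2Triangulation in
/-- If `L` is a metric flag edge-labeled triangulation of `S²`,
then no two 3-Euclidean vertices of `L` are joined by an edge of `L`. -/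
theorem no_adjacent_three_euclidean_vertices {V : Type} [Fintype V] [DecidableEq V]
    (L : S2Triangulation V) (M : EdgeLabeling L) (hflag : MetricFlag L M) :
    ∀ s s' : V, Is3Euclidean L M s → Is3Euclidean L M s' → ¬ L.Adj s s' := by
  intro s s' hs hs' hadj
  obtain ⟨s0, s1, s2, h01, h12, h02, hlink, f01, f12, f20, hsum⟩ := hs
  have a01 : L.Adj s0 s1 := ⟨h01, _, f01, by simp, by simp⟩
  have a12 : L.Adj s1 s2 := ⟨h12, _, f12, by simp, by simp⟩
  have a20 : L.Adj s2 s0 := ⟨h02.symm, _, f20, by simp, by simp⟩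
  have asymm : ∀ u w : V, L.Adj u w → L.Adj w u := by
    rintro u w ⟨h, f, hf, hu, hw⟩; exact ⟨h.symm, f, hf, hw, hu⟩
  have hnf : ({s0, s1, s2} : Finset V) ∉ L.faces := by
    rw [hflag s0 s1 s2 a01 a12 a20, hsum]
    exact lt_irrefl 1
  have hs'mem : s' ∈ ({s0, s1, s2} : Finset V) := by
    rw [← hlink]; simp [S2Triangulation.linkVerts, hadj]
  have perm : ∀ x y z : V, ({x, y, z} : Finset V) = {y, x, z} := fun x y z => by
    ext w; simp; tauto
  have perm2 : ∀ x y z : V, ({x, y, z} : Finset V) = {x, z, y} := fun x y z => by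
    ext w; simp; tauto
  simp only [Finset.mem_insert, Finset.mem_singleton] at hs'mem
  rcases hs'mem with rfl | rfl | rfl
  · exact hnf (face_of_link_pair' L M hs' a01 (asymm _ _ a20) h12)
  · have := face_of_link_pair' L M hs' (asymm _ _ a01) a12 h02
    rw [perm] at this
    exact hnf this
  · have := face_of_link_pair' L M hs' a20 (asymm _ _ a12) h01
    rw [perm, perm2] at this
    exact hnf this
end

section
/- Let L be a metric flag edge-labeled triangulation of S², let s and s' be 4-Euclidean vertices of L joined by an edge, let t and b be the two vertices such that {s,s',t} and {s,s',b} are the two 2-simplices of L containing the edge {s,s'}, let v be the vertex of the link 4-cycle of s opposite s', and let v' be the vertex of the link 4-cycle of s' opposite s, and suppose v ≠ v'. If the 4-cycle t, v, b, v' is the boundary of the union of two 2-simplices of L sharing an edge, then L is the suspension of a 4-gon; more precisely, L has vertex set {s, s', t, b, v, v'}, with suspension points t and b and 4-gon s, v, v', s'. -/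
open Finset

namespace SuspAux

open S2Triangulation

variable {V : Type} [Fintype V] [DecidableEq V]

lemma tri3 (L : S2Triangulation V) {u a b : V}
    (hf : ({u, a, b} : Finset V) ∈ L.faces) : u ≠ a ∧ u ≠ b ∧ a ≠ b := by
  have h3 := L.card_eq_three _ hf
  refine ⟨?_, ?_, ?_⟩ <;> rintro rfl
  · rw [show ({u, u, b} : Finset V) = {u, b} from by ext z; simp; try tauto] at h3
    have h := Finset.card_insert_le u ({b} : Finset V)
    simp at h; omega
  · rw [show ({u, a, u} : Finset V) = {u, a} from by ext z; simp; try tauto] at h3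
    have h := Finset.card_insert_le u ({a} : Finset V)
    simp at h; omega
  · rw [show ({u, a, a} : Finset V) = {u, a} from by ext z; simp; try tauto] at h3
    have h := Finset.card_insert_le u ({a} : Finset V)
    simp at h; omega

lemma pair_subset (u a x : V) : ({u, a} : Finset V) ⊆ {u, a, x} := by
  intro z hz; simp at hz ⊢; tauto

lemma tri_ne {u a x y : V} (hxu : x ≠ u) (hxa : x ≠ a) (hxy : x ≠ y) :
    ({u, a, x} : Finset V) ≠ {u, a, y} := by
  intro h
  have hm : x ∈ ({u, a, y} : Finset V) := h ▸ (by simp)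
  simp [hxu, hxa, hxy] at hm

lemma faces_of_edge (L : S2Triangulation V) {e f1 f2 : Finset V}
    (he : e.card = 2) (h1 : f1 ∈ L.faces) (h2 : f2 ∈ L.faces)
    (he1 : e ⊆ f1) (he2 : e ⊆ f2) (h12 : f1 ≠ f2) :
    ∀ f ∈ L.faces, e ⊆ f → f = f1 ∨ f = f2 := by
  intro f hf hef
  have hc := L.edge_two_faces e he ⟨f1, h1, he1⟩
  have hsub : ({f1, f2} : Finset (Finset V)) ⊆ L.faces.filter (fun g => e ⊆ g) := by
    intro g hg
    simp only [Finset.mem_insert, Finset.mem_singleton] at hg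
    rcases hg with rfl | rfl <;> simp [Finset.mem_filter, h1, h2, he1, he2]
  have hcard : ({f1, f2} : Finset (Finset V)).card = 2 := by
    rw [Finset.card_insert_of_notMem (by simp [h12]), Finset.card_singleton]
  have heq := Finset.eq_of_subset_of_card_le hsub (by rw [hc, hcard])
  have hfm : f ∈ ({f1, f2} : Finset (Finset V)) := by
    rw [heq]; exact Finset.mem_filter.mpr ⟨hf, hef⟩
  simpa using hfm

lemma link_step (L : S2Triangulation V) {u a b x y : V}
    (hx : ({u, a, x} : Finset V) ∈ L.faces) (hy : ({u, a, y} : Finset V) ∈ L.faces)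
    (hxy : x ≠ y) (hf : ({u, a, b} : Finset V) ∈ L.faces) : b = x ∨ b = y := by
  obtain ⟨hua, hux, hax⟩ := tri3 L hx
  obtain ⟨-, huy, hay⟩ := tri3 L hy
  obtain ⟨-, hub, hab⟩ := tri3 L hf
  have he : ({u, a} : Finset V).card = 2 := by
    rw [Finset.card_insert_of_notMem (by simp [hua]), Finset.card_singleton]
  have hne : ({u, a, x} : Finset V) ≠ {u, a, y} :=
    tri_ne (Ne.symm hux) (Ne.symm hax) hxy
  rcases faces_of_edge L he hx hy (pair_subset u a x) (pair_subset u a y) hne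
      _ hf (pair_subset u a b) with h | h
  · have hm : b ∈ ({u, a, x} : Finset V) := h ▸ (by simp : b ∈ ({u, a, b} : Finset V))
    simp [Ne.symm hub, Ne.symm hab] at hm
    exact Or.inl hm
  · have hm : b ∈ ({u, a, y} : Finset V) := h ▸ (by simp : b ∈ ({u, a, b} : Finset V))
    simp [Ne.symm hub, Ne.symm hab] at hm
    exact Or.inr hm

lemma link_subset (L : S2Triangulation V) {u x0 x1 x2 x3 : V}
    (h01 : ({u, x0, x1} : Finset V) ∈ L.faces) (h12 : ({u, x1, x2} : Finset V) ∈ L.faces)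
    (h23 : ({u, x2, x3} : Finset V) ∈ L.faces) (h30 : ({u, x3, x0} : Finset V) ∈ L.faces)
    (h02 : x0 ≠ x2) (h13 : x1 ≠ x3) :
    ∀ w, L.Adj u w → w = x0 ∨ w = x1 ∨ w = x2 ∨ w = x3 := by
  have g03 : ({u, x0, x3} : Finset V) ∈ L.faces := by
    rw [show ({u, x0, x3} : Finset V) = {u, x3, x0} from by ext z; simp; tauto]; exact h30
  have g10 : ({u, x1, x0} : Finset V) ∈ L.faces := by
    rw [show ({u, x1, x0} : Finset V) = {u, x0, x1} from by ext z; simp; tauto]; exact h01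
  have g21 : ({u, x2, x1} : Finset V) ∈ L.faces := by
    rw [show ({u, x2, x1} : Finset V) = {u, x1, x2} from by ext z; simp; tauto]; exact h12
  have g32 : ({u, x3, x2} : Finset V) ∈ L.faces := by
    rw [show ({u, x3, x2} : Finset V) = {u, x2, x3} from by ext z; simp; tauto]; exact h23
  intro w hw
  obtain ⟨hu0, -, -⟩ := tri3 L h01
  have chain := L.link_connected u x0 w ⟨hu0, {u, x0, x1}, h01, by simp, by simp⟩ hw
  clear hw
  induction chain with
  | refl => exact Or.inl rfl
  | @tail p q hp hpq ih =>
    rcases ih with rfl | rfl | rfl | rfl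
    · rcases link_step L h01 g03 h13 hpq.2 with rfl | rfl <;> tauto
    · rcases link_step L g10 h12 h02 hpq.2 with rfl | rfl <;> tauto
    · rcases link_step L g21 h23 h13 hpq.2 with rfl | rfl <;> tauto
    · rcases link_step L g32 h30 (Ne.symm h02) hpq.2 with rfl | rfl <;> tauto

lemma faces_at (L : S2Triangulation V) {u x0 x1 x2 x3 : V}
    (h01 : ({u, x0, x1} : Finset V) ∈ L.faces) (h12 : ({u, x1, x2} : Finset V) ∈ L.faces)
    (h23 : ({u, x2, x3} : Finset V) ∈ L.faces) (h30 : ({u, x3, x0} : Finset V) ∈ L.faces)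
    (h02 : x0 ≠ x2) (h13 : x1 ≠ x3) :
    ∀ f ∈ L.faces, u ∈ f →
      f = {u, x0, x1} ∨ f = {u, x1, x2} ∨ f = {u, x2, x3} ∨ f = {u, x3, x0} := by
  obtain ⟨hu0, hu1, hd01⟩ := tri3 L h01
  obtain ⟨-, hu2, hd12⟩ := tri3 L h12
  obtain ⟨-, hu3, hd23⟩ := tri3 L h23
  obtain ⟨-, -, hd30⟩ := tri3 L h30
  have g03 : ({u, x0, x3} : Finset V) ∈ L.faces := by
    rw [show ({u, x0, x3} : Finset V) = {u, x3, x0} from by ext z; simp; tauto]; exact h30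
  have g10 : ({u, x1, x0} : Finset V) ∈ L.faces := by
    rw [show ({u, x1, x0} : Finset V) = {u, x0, x1} from by ext z; simp; tauto]; exact h01
  have g21 : ({u, x2, x1} : Finset V) ∈ L.faces := by
    rw [show ({u, x2, x1} : Finset V) = {u, x1, x2} from by ext z; simp; tauto]; exact h12
  have g32 : ({u, x3, x2} : Finset V) ∈ L.faces := by
    rw [show ({u, x3, x2} : Finset V) = {u, x2, x3} from by ext z; simp; tauto]; exact h23
  intro f hf huf
  have h3 := L.card_eq_three f hf
  obtain ⟨a, haf, hau⟩ := Finset.exists_mem_ne (s := f) (by omega) u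
  have hadj : L.Adj u a := ⟨Ne.symm hau, f, hf, huf, haf⟩
  have hsubf : ({u, a} : Finset V) ⊆ f := by
    intro z hz; simp at hz; rcases hz with rfl | rfl; exacts [huf, haf]
  have hea : ({u, a} : Finset V).card = 2 := by
    rw [Finset.card_insert_of_notMem (by simp [Ne.symm hau]), Finset.card_singleton]
  rcases link_subset L h01 h12 h23 h30 h02 h13 a hadj with rfl | rfl | rfl | rfl
  · rcases faces_of_edge L hea h01 g03 (pair_subset u a x1) (pair_subset u a x3)
        (tri_ne (Ne.symm hu1) (Ne.symm hd01) h13) f hf hsubf with h | h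
    · exact Or.inl h
    · exact Or.inr (Or.inr (Or.inr (h.trans (by ext z; simp; tauto))))
  · rcases faces_of_edge L hea g10 h12 (pair_subset u a x0) (pair_subset u a x2)
        (tri_ne (Ne.symm hu0) hd01 h02) f hf hsubf with h | h
    · exact Or.inl (h.trans (by ext z; simp; tauto))
    · exact Or.inr (Or.inl h)
  · rcases faces_of_edge L hea g21 h23 (pair_subset u a x1) (pair_subset u a x3)
        (tri_ne (Ne.symm hu1) hd12 h13) f hf hsubf with h | h
    · exact Or.inr (Or.inl (h.trans (by ext z; simp; tauto)))
    · exact Or.inr (Or.inr (Or.inl h))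
  · rcases faces_of_edge L hea g32 h30 (pair_subset u a x2) (pair_subset u a x0)
        (tri_ne (Ne.symm hu2) hd23 (Ne.symm h02)) f hf hsubf with h | h
    · exact Or.inr (Or.inr (Or.inl (h.trans (by ext z; simp; tauto))))
    · exact Or.inr (Or.inr (Or.inr h))

lemma rot (a b c : V) : ({a, b, c} : Finset V) = {b, c, a} := by ext z; simp; tauto

lemma rot2 (a b c : V) : ({a, b, c} : Finset V) = {c, a, b} := by ext z; simp; tauto

lemma swap12 (a b c : V) : ({a, b, c} : Finset V) = {b, a, c} := by ext z; simp; tauto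

lemma rev (a b c : V) : ({a, b, c} : Finset V) = {c, b, a} := by ext z; simp; tauto

end SuspAux

open S2Triangulation in
/-- With `L`, `s`, `s'`, `t`, `b`, `v`, `v'` as in Statement 6 and
`v ≠ v'`: if the 4-cycle `t, v, b, v'` is the boundary of the union of two
2-simplices of `L` sharing an edge, then `L` is the suspension of a 4-gon; more
precisely, `L` has vertex set `{s, s', t, b, v, v'}`, with suspension points `t` and
`b` and 4-gon `s, v, v', s'`. -/
theorem boundary_of_two_simplices_gives_suspension_of_4gon
    {V : Type} [Fintype V] [DecidableEq V]
    (L : S2Triangulation V) (M : EdgeLabeling L) (hflag : MetricFlag L M)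
    (s s' t b v v' : V)
    (hadj : L.Adj s s')
    (hs : Is4EuclideanCycle L M s s' t v b)
    (hs' : Is4EuclideanCycle L M s' s t v' b)
    (hne : v ≠ v')
    (hbd : (({t, v, b} : Finset V) ∈ L.faces ∧ ({t, b, v'} : Finset V) ∈ L.faces) ∨
           (({v, b, v'} : Finset V) ∈ L.faces ∧ ({v, v', t} : Finset V) ∈ L.faces)) :
    IsSuspensionCycle L t b
      (fun i : ZMod 4 =>
        if i = 0 then s else if i = 1 then v else if i = 2 then v' else s') := by
  classical
  obtain ⟨hs't, hs'v, hs'b, htv, htb, hvb, hlkS, hA1, hA2, hA3, hA4, hNsv, hNtb, -, -, -, -⟩ := hs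
  obtain ⟨hst, hsv', hsb, htv', -, hv'b, hlkS', hB0, hB1, hB2, hB3, -, -, hmst, -, -, hmbs⟩ := hs'
  have hss' : s ≠ s' := hadj.1
  have hsv : s ≠ v := by
    have hm : v ∈ L.linkVerts s := by rw [hlkS]; simp
    exact ((Finset.mem_filter.mp hm).2).1
  have hs'v' : s' ≠ v' := by
    have hm : v' ∈ L.linkVerts s' := by rw [hlkS']; simp
    exact ((Finset.mem_filter.mp hm).2).1
  have hAdjst : L.Adj s t := ⟨hst, {s, s', t}, hA1, by simp, by simp⟩
  have hAdjbs : L.Adj b s := ⟨Ne.symm hsb, {s, b, s'}, hA4, by simp, by simp⟩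
  have hntb : ¬ L.Adj t b := by
    intro h
    refine hNtb ((hflag s t b hAdjst h hAdjbs).mpr ?_)
    have h2 : (2 : ℚ) ≤ (M.m t b : ℚ) := by exact_mod_cast M.two_le t b h
    have h0 : (0 : ℚ) < (M.m t b : ℚ)⁻¹ := inv_pos.mpr (by linarith)
    rw [hmst, hmbs]
    norm_num
    linarith
  rcases hbd with ⟨h1, -⟩ | ⟨hC1, hC2⟩
  · exact absurd ⟨htb, {t, v, b}, h1, by simp, by simp⟩ hntb
  have hT01 : ({t, s, v} : Finset V) ∈ L.faces := by
    rw [SuspAux.swap12]; exact hA2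
  have hT12 : ({t, v, v'} : Finset V) ∈ L.faces := by
    rw [SuspAux.rot]; exact hC2
  have hT23 : ({t, v', s'} : Finset V) ∈ L.faces := by
    rw [SuspAux.rot2]; exact hB1
  have hT30 : ({t, s', s} : Finset V) ∈ L.faces := by
    rw [SuspAux.rev]; exact hA1
  have hU01 : ({b, s, v} : Finset V) ∈ L.faces := by
    rw [SuspAux.rot]; exact hA3
  have hU12 : ({b, v, v'} : Finset V) ∈ L.faces := by
    rw [SuspAux.swap12]; exact hC1
  have hU23 : ({b, v', s'} : Finset V) ∈ L.faces := by
    rw [SuspAux.rev]; exact hB2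
  have hU30 : ({b, s', s} : Finset V) ∈ L.faces := by
    rw [SuspAux.rot2]; exact hA4
  have hV01 : ({v, t, s} : Finset V) ∈ L.faces := by
    rw [SuspAux.rev]; exact hA2
  have hV12 : ({v, s, b} : Finset V) ∈ L.faces := by
    rw [SuspAux.swap12]; exact hA3
  have hW01 : ({v', t, s'} : Finset V) ∈ L.faces := by
    rw [SuspAux.rev]; exact hB1
  have hW12 : ({v', s', b} : Finset V) ∈ L.faces := by
    rw [SuspAux.swap12]; exact hB2
  have hW23 : ({v', b, v} : Finset V) ∈ L.faces := by
    rw [SuspAux.rev]; exact hC1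
  have hW30 : ({v', v, t} : Finset V) ∈ L.faces := by
    rw [SuspAux.swap12]; exact hC2
  have LSs := SuspAux.link_subset L hA1 hA2 hA3 hA4 hs'v htb
  have LSs' := SuspAux.link_subset L hB0 hB1 hB2 hB3 hsv' htb
  have LSt := SuspAux.link_subset L hT01 hT12 hT23 hT30 hsv' (Ne.symm hs'v)
  have LSb := SuspAux.link_subset L hU01 hU12 hU23 hU30 hsv' (Ne.symm hs'v)
  have LSv := SuspAux.link_subset L hV01 hV12 hC1 hC2 htb hsv'
  have LSv' := SuspAux.link_subset L hW01 hW12 hW23 hW30 htb hs'v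
  have FAt := SuspAux.faces_at L hT01 hT12 hT23 hT30 hsv' (Ne.symm hs'v)
  have FAb := SuspAux.faces_at L hU01 hU12 hU23 hU30 hsv' (Ne.symm hs'v)
  have FAs := SuspAux.faces_at L hA1 hA2 hA3 hA4 hs'v htb
  have FAs' := SuspAux.faces_at L hB0 hB1 hB2 hB3 hsv' htb
  have FAv := SuspAux.faces_at L hV01 hV12 hC1 hC2 htb hsv'
  have FAv' := SuspAux.faces_at L hW01 hW12 hW23 hW30 htb hs'v
  have hvert : ∀ x : V, x = s ∨ x = s' ∨ x = t ∨ x = b ∨ x = v ∨ x = v' := by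
    intro x
    have chain := L.conn s x
    induction chain with
    | refl => exact Or.inl rfl
    | @tail p q hp hpq ih =>
      rcases ih with rfl | rfl | rfl | rfl | rfl | rfl
      · rcases LSs q ⟨hpq.1, hpq.2⟩ with h | h | h | h
        exacts [Or.inr (Or.inl h), Or.inr (Or.inr (Or.inl h)),
          Or.inr (Or.inr (Or.inr (Or.inr (Or.inl h)))), Or.inr (Or.inr (Or.inr (Or.inl h)))]
      · rcases LSs' q ⟨hpq.1, hpq.2⟩ with h | h | h | h
        exacts [Or.inl h, Or.inr (Or.inr (Or.inl h)),
          Or.inr (Or.inr (Or.inr (Or.inr (Or.inr h)))), Or.inr (Or.inr (Or.inr (Or.inl h)))]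
      · rcases LSt q ⟨hpq.1, hpq.2⟩ with h | h | h | h
        exacts [Or.inl h, Or.inr (Or.inr (Or.inr (Or.inr (Or.inl h)))),
          Or.inr (Or.inr (Or.inr (Or.inr (Or.inr h)))), Or.inr (Or.inl h)]
      · rcases LSb q ⟨hpq.1, hpq.2⟩ with h | h | h | h
        exacts [Or.inl h, Or.inr (Or.inr (Or.inr (Or.inr (Or.inl h)))),
          Or.inr (Or.inr (Or.inr (Or.inr (Or.inr h)))), Or.inr (Or.inl h)]
      · rcases LSv q ⟨hpq.1, hpq.2⟩ with h | h | h | h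
        exacts [Or.inr (Or.inr (Or.inl h)), Or.inl h,
          Or.inr (Or.inr (Or.inr (Or.inl h))), Or.inr (Or.inr (Or.inr (Or.inr (Or.inr h))))]
      · rcases LSv' q ⟨hpq.1, hpq.2⟩ with h | h | h | h
        exacts [Or.inr (Or.inr (Or.inl h)), Or.inr (Or.inl h),
          Or.inr (Or.inr (Or.inr (Or.inl h))), Or.inr (Or.inr (Or.inr (Or.inr (Or.inl h))))]
  have htbmem : ∀ f ∈ L.faces, t ∈ f ∨ b ∈ f := by
    intro f hf
    have h3 := L.card_eq_three f hf
    obtain ⟨u, hu⟩ := Finset.card_pos.mp (show 0 < f.card by omega)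
    rcases hvert u with rfl | rfl | rfl | rfl | rfl | rfl
    · rcases FAs f hf hu with rfl | rfl | rfl | rfl <;> simp
    · rcases FAs' f hf hu with rfl | rfl | rfl | rfl <;> simp
    · exact Or.inl hu
    · exact Or.inr hu
    · rcases FAv f hf hu with rfl | rfl | rfl | rfl <;> simp
    · rcases FAv' f hf hu with rfl | rfl | rfl | rfl <;> simp
  have hi : ∀ i : ZMod 4, i = 0 ∨ i = 1 ∨ i = 2 ∨ i = 3 := by decide
  have e01 : (0 : ZMod 4) + 1 = 1 := by decide
  have e12 : (1 : ZMod 4) + 1 = 2 := by decide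
  have e23 : (2 : ZMod 4) + 1 = 3 := by decide
  have e30 : (3 : ZMod 4) + 1 = 0 := by decide
  have c0 : (fun i : ZMod 4 => if i = 0 then s else if i = 1 then v else if i = 2 then v' else s') 0 = s := if_pos rfl
  have c1 : (fun i : ZMod 4 => if i = 0 then s else if i = 1 then v else if i = 2 then v' else s') 1 = v := by
    show (if (1 : ZMod 4) = 0 then s else if (1 : ZMod 4) = 1 then v else if (1 : ZMod 4) = 2 then v' else s') = v
    rw [if_neg (by decide), if_pos rfl]
  have c2 : (fun i : ZMod 4 => if i = 0 then s else if i = 1 then v else if i = 2 then v' else s') 2 = v' := by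
    show (if (2 : ZMod 4) = 0 then s else if (2 : ZMod 4) = 1 then v else if (2 : ZMod 4) = 2 then v' else s') = v'
    rw [if_neg (by decide), if_neg (by decide), if_pos rfl]
  have c3 : (fun i : ZMod 4 => if i = 0 then s else if i = 1 then v else if i = 2 then v' else s') 3 = s' := by
    show (if (3 : ZMod 4) = 0 then s else if (3 : ZMod 4) = 1 then v else if (3 : ZMod 4) = 2 then v' else s') = s'
    rw [if_neg (by decide), if_neg (by decide), if_neg (by decide)]
  refine ⟨htb, ?_, ?_, ?_, ?_, hntb, ?_, ?_⟩
  · intro i j hij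
    rcases hi i with rfl | rfl | rfl | rfl <;> rcases hi j with rfl | rfl | rfl | rfl <;>
      simp only [c0, c1, c2, c3] at hij <;>
      first
        | rfl
        | exact absurd hij (by assumption)
        | exact absurd hij.symm (by assumption)
  · intro i
    rcases hi i with rfl | rfl | rfl | rfl
    · rw [c0]; exact Ne.symm hst
    · rw [c1]; exact htv
    · rw [c2]; exact htv'
    · rw [c3]; exact Ne.symm hs't
  · intro i
    rcases hi i with rfl | rfl | rfl | rfl
    · rw [c0]; exact Ne.symm hsb
    · rw [c1]; exact Ne.symm hvb
    · rw [c2]; exact Ne.symm hv'b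
    · rw [c3]; exact Ne.symm hs'b
  · intro x
    rcases hvert x with rfl | rfl | rfl | rfl | rfl | rfl
    · exact Or.inr (Or.inr ⟨0, c0.symm⟩)
    · exact Or.inr (Or.inr ⟨3, c3.symm⟩)
    · exact Or.inl rfl
    · exact Or.inr (Or.inl rfl)
    · exact Or.inr (Or.inr ⟨1, c1.symm⟩)
    · exact Or.inr (Or.inr ⟨2, c2.symm⟩)
  · intro i
    rcases hi i with rfl | rfl | rfl | rfl
    · rw [e01, c0, c1]; exact ⟨hsv, {s, t, v}, hA2, by simp, by simp⟩
    · rw [e12, c1, c2]; exact ⟨hne, {v, b, v'}, hC1, by simp, by simp⟩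
    · rw [e23, c2, c3]; exact ⟨Ne.symm hs'v', {s', v', b}, hB2, by simp, by simp⟩
    · rw [e30, c3, c0]; exact ⟨Ne.symm hss', {s, s', t}, hA1, by simp, by simp⟩
  · intro f
    constructor
    · intro hf
      rcases htbmem f hf with htf | hbf
      · rcases FAt f hf htf with rfl | rfl | rfl | rfl
        · exact ⟨0, Or.inl (by rw [e01, c0, c1])⟩
        · exact ⟨1, Or.inl (by rw [e12, c1, c2])⟩
        · exact ⟨2, Or.inl (by rw [e23, c2, c3])⟩
        · exact ⟨3, Or.inl (by rw [e30, c3, c0])⟩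
      · rcases FAb f hf hbf with rfl | rfl | rfl | rfl
        · exact ⟨0, Or.inr (by rw [e01, c0, c1])⟩
        · exact ⟨1, Or.inr (by rw [e12, c1, c2])⟩
        · exact ⟨2, Or.inr (by rw [e23, c2, c3])⟩
        · exact ⟨3, Or.inr (by rw [e30, c3, c0])⟩
    · rintro ⟨i, rfl | rfl⟩
      · rcases hi i with rfl | rfl | rfl | rfl
        · rw [e01, c0, c1]; exact hT01
        · rw [e12, c1, c2]; exact hT12
        · rw [e23, c2, c3]; exact hT23
        · rw [e30, c3, c0]; exact hT30
      · rcases hi i with rfl | rfl | rfl | rfl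
        · rw [e01, c0, c1]; exact hU01
        · rw [e12, c1, c2]; exact hU12
        · rw [e23, c2, c3]; exact hU23
        · rw [e30, c3, c0]; exact hU30
end

section
/- Let L be a metric flag edge-labeled triangulation of S², let s and s' be 4-Euclidean vertices of L joined by an edge, let t and b be the two vertices such that {s,s',t} and {s,s',b} are the two 2-simplices of L containing the edge {s,s'}, let v be the vertex of the link 4-cycle of s opposite s', and let v' be the vertex of the link 4-cycle of s' opposite s, and suppose v ≠ v'. If the 4-cycle t, v, b, v' is the vertex set of the link of some vertex x of L, then L is the suspension of a 5-gon; more precisely, L has vertex set {s, s', t, b, v, v', x}, with suspension points t and b and 5-gon s, v, x, v', s'. -/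
open Finset

namespace S2Triangulation

variable {V : Type} [Fintype V] [DecidableEq V]

lemma adj_symm' (L : S2Triangulation V) {u w : V} (h : L.Adj u w) : L.Adj w u := by
  obtain ⟨hne, f, hf, hu, hw⟩ := h
  exact ⟨hne.symm, f, hf, hw, hu⟩

lemma adj_of_face (L : S2Triangulation V) {f : Finset V} {u w : V}
    (hf : f ∈ L.faces) (hu : u ∈ f) (hw : w ∈ f) (h : u ≠ w) : L.Adj u w :=
  ⟨h, f, hf, hu, hw⟩

lemma mem_linkVerts_iff (L : S2Triangulation V) {s u : V} :
    u ∈ L.linkVerts s ↔ L.Adj s u := by simp [linkVerts]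

lemma finset_ne {f g : Finset V} {a : V} (ha : a ∈ f) (hg : a ∉ g) : f ≠ g :=
  fun h => hg (h ▸ ha)

lemma third_elt (L : S2Triangulation V) {f : Finset V} {a u : V}
    (hf : f ∈ L.faces) (ha : a ∈ f) (hu : u ∈ f) (hau : a ≠ u) :
    ∃ w, w ≠ a ∧ w ≠ u ∧ f = {a, u, w} := by
  have h3 := L.card_eq_three f hf
  have h2 : ((f.erase u).erase a).card = 1 := by
    rw [Finset.card_erase_of_mem (Finset.mem_erase.mpr ⟨hau, ha⟩),
        Finset.card_erase_of_mem hu, h3]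
  obtain ⟨w, hw⟩ := Finset.card_eq_one.mp h2
  have hwm : w ∈ (f.erase u).erase a := hw ▸ Finset.mem_singleton_self w
  obtain ⟨hwa, hwm2⟩ := Finset.mem_erase.mp hwm
  obtain ⟨hwu, hwf⟩ := Finset.mem_erase.mp hwm2
  refine ⟨w, hwa, hwu, ?_⟩
  have hsub : ({a, u, w} : Finset V) ⊆ f := by
    intro z hz
    simp only [Finset.mem_insert, Finset.mem_singleton] at hz
    rcases hz with rfl | rfl | rfl <;> assumption
  have hcard : ({a, u, w} : Finset V).card = 3 := by
    rw [Finset.card_insert_of_notMem (by simp [hau, Ne.symm hwa]),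
        Finset.card_insert_of_notMem (by simp [Ne.symm hwu]),
        Finset.card_singleton]
  exact (Finset.eq_of_subset_of_card_le hsub (by omega)).symm

lemma exists_third (L : S2Triangulation V) {f : Finset V} {a : V}
    (hf : f ∈ L.faces) (ha : a ∈ f) :
    ∃ u w, u ≠ w ∧ a ≠ u ∧ a ≠ w ∧ f = {a, u, w} := by
  have h3 := L.card_eq_three f hf
  have h2 : (f.erase a).card = 2 := by rw [Finset.card_erase_of_mem ha, h3]
  obtain ⟨u, w, huw, hew⟩ := Finset.card_eq_two.mp h2
  have hu : u ∈ f.erase a := by rw [hew]; simp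
  have hw : w ∈ f.erase a := by rw [hew]; simp
  obtain ⟨hua, huf⟩ := Finset.mem_erase.mp hu
  obtain ⟨hwa, hwf⟩ := Finset.mem_erase.mp hw
  refine ⟨u, w, huw, hua.symm, hwa.symm, ?_⟩
  have := Finset.insert_erase ha
  rw [hew] at this
  exact this.symm

lemma face_eq_of_edge (L : S2Triangulation V) {f1 f2 f : Finset V} {a u : V}
    (hau : a ≠ u) (h1 : f1 ∈ L.faces) (h2 : f2 ∈ L.faces) (h12 : f1 ≠ f2)
    (ha1 : a ∈ f1) (hu1 : u ∈ f1) (ha2 : a ∈ f2) (hu2 : u ∈ f2)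
    (hf : f ∈ L.faces) (haf : a ∈ f) (huf : u ∈ f) : f = f1 ∨ f = f2 := by
  have hcard : ({a, u} : Finset V).card = 2 := Finset.card_pair hau
  have hsub : ∀ g : Finset V, a ∈ g → u ∈ g → ({a, u} : Finset V) ⊆ g := by
    intro g hg1 hg2 z hz
    simp only [Finset.mem_insert, Finset.mem_singleton] at hz
    rcases hz with rfl | rfl <;> assumption
  have h2f := L.edge_two_faces {a, u} hcard ⟨f1, h1, hsub f1 ha1 hu1⟩
  have hm1 : f1 ∈ L.faces.filter (fun g => ({a, u} : Finset V) ⊆ g) :=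
    Finset.mem_filter.mpr ⟨h1, hsub f1 ha1 hu1⟩
  have hm2 : f2 ∈ L.faces.filter (fun g => ({a, u} : Finset V) ⊆ g) :=
    Finset.mem_filter.mpr ⟨h2, hsub f2 ha2 hu2⟩
  have hmf : f ∈ L.faces.filter (fun g => ({a, u} : Finset V) ⊆ g) :=
    Finset.mem_filter.mpr ⟨hf, hsub f haf huf⟩
  have hFe : ({f1, f2} : Finset (Finset V))
      = L.faces.filter (fun g => ({a, u} : Finset V) ⊆ g) := by
    apply Finset.eq_of_subset_of_card_le
    · intro g hg
      simp only [Finset.mem_insert, Finset.mem_singleton] at hg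
      rcases hg with rfl | rfl <;> assumption
    · rw [h2f, Finset.card_pair h12]
  rw [← hFe] at hmf
  simpa using hmf

lemma exists_two_faces (L : S2Triangulation V) {a u : V} (h : L.Adj a u) :
    ∃ w1 w2, w1 ≠ w2 ∧ w1 ≠ a ∧ w1 ≠ u ∧ w2 ≠ a ∧ w2 ≠ u ∧
      ({a, u, w1} : Finset V) ∈ L.faces ∧ ({a, u, w2} : Finset V) ∈ L.faces := by
  obtain ⟨hau, f, hf, ha, hu⟩ := h
  have hcard : ({a, u} : Finset V).card = 2 := Finset.card_pair hau
  have hsub : ({a, u} : Finset V) ⊆ f := by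
    intro z hz
    simp only [Finset.mem_insert, Finset.mem_singleton] at hz
    rcases hz with rfl | rfl <;> assumption
  have h2f := L.edge_two_faces {a, u} hcard ⟨f, hf, hsub⟩
  obtain ⟨f1, f2, hne, hFeq⟩ := Finset.card_eq_two.mp h2f
  have hm1 : f1 ∈ L.faces.filter (fun g => ({a, u} : Finset V) ⊆ g) := by
    rw [hFeq]; simp
  have hm2 : f2 ∈ L.faces.filter (fun g => ({a, u} : Finset V) ⊆ g) := by
    rw [hFeq]; simp
  obtain ⟨hf1, hs1⟩ := Finset.mem_filter.mp hm1
  obtain ⟨hf2, hs2⟩ := Finset.mem_filter.mp hm2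
  have ha1 : a ∈ f1 := hs1 (by simp)
  have hu1 : u ∈ f1 := hs1 (by simp)
  have ha2 : a ∈ f2 := hs2 (by simp)
  have hu2 : u ∈ f2 := hs2 (by simp)
  obtain ⟨w1, hw1a, hw1u, he1⟩ := third_elt L hf1 ha1 hu1 hau
  obtain ⟨w2, hw2a, hw2u, he2⟩ := third_elt L hf2 ha2 hu2 hau
  refine ⟨w1, w2, ?_, hw1a, hw1u, hw2a, hw2u, he1 ▸ hf1, he2 ▸ hf2⟩
  intro hww
  apply hne
  rw [he1, he2, hww]

lemma ne_of_face_triple (L : S2Triangulation V) {a u c : V}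
    (h : ({a, u, c} : Finset V) ∈ L.faces) (hau : a ≠ u) : a ≠ c ∧ u ≠ c := by
  have h3 := L.card_eq_three _ h
  constructor
  · rintro rfl
    have he : ({a, u, a} : Finset V) = {a, u} := by
      ext z; simp only [Finset.mem_insert, Finset.mem_singleton]; tauto
    rw [he, Finset.card_pair hau] at h3
    omega
  · rintro rfl
    have he : ({a, u, u} : Finset V) = {a, u} := by
      ext z; simp only [Finset.mem_insert, Finset.mem_singleton]; tauto
    rw [he, Finset.card_pair hau] at h3
    omega


lemma tri_comm12 (a b c : V) : ({a, b, c} : Finset V) = {b, a, c} :=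
  Finset.insert_comm a b {c}

lemma tri_comm23 (a b c : V) : ({a, b, c} : Finset V) = {a, c, b} := by
  rw [Finset.pair_comm b c]

lemma tri_rot (a b c : V) : ({a, b, c} : Finset V) = {b, c, a} := by
  rw [tri_comm12, tri_comm23]

lemma tri_comm13 (a b c : V) : ({a, b, c} : Finset V) = {c, b, a} := by
  rw [tri_rot, tri_rot, tri_comm23]

lemma third_of_pin {a u c : V} {f1 f2 : Finset V}
    (h : ({a, u, c} : Finset V) = f1 ∨ ({a, u, c} : Finset V) = f2) :
    c ∈ f1 ∨ c ∈ f2 := by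
  have hc : c ∈ ({a, u, c} : Finset V) := by simp
  rcases h with h | h
  · exact Or.inl (h ▸ hc)
  · exact Or.inr (h ▸ hc)

end S2Triangulation

set_option maxHeartbeats 8000000 in
open S2Triangulation in
/-- With `L`, `s`, `s'`, `t`, `b`, `v`, `v'` as in Statement 6 and
`v ≠ v'`: if the 4-cycle `t, v, b, v'` is the vertex set of the link of some vertex
`x` of `L`, then `L` is the suspension of a 5-gon; more precisely, `L` has vertex
set `{s, s', t, b, v, v', x}`, with suspension points `t` and `b` and 5-gon
`s, v, x, v', s'`. -/
theorem link_circuit_gives_suspension_of_5gon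
    {V : Type} [Fintype V] [DecidableEq V]
    (L : S2Triangulation V) (M : EdgeLabeling L) (hflag : MetricFlag L M)
    (s s' t b v v' : V)
    (hadj : L.Adj s s')
    (hs : Is4EuclideanCycle L M s s' t v b)
    (hs' : Is4EuclideanCycle L M s' s t v' b)
    (hne : v ≠ v')
    (x : V) (hx : L.linkVerts x = {t, v, b, v'}) :
    IsSuspensionCycle L t b
      (fun i : ZMod 5 =>
        if i = 0 then s else if i = 1 then v else if i = 2 then x
        else if i = 3 then v' else s') := by
  obtain ⟨hs't, hs'v, hs'b, htv, htb, hvb, hlinks, hsst, hstv, hsvb, hsbs, hnssv, hnstb,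
    m1, m2, m3, m4⟩ := hs
  obtain ⟨hst, hsv', hsb, htv', htb', hv'b, hlinks', hs'st, hs'tv', hs'v'b, hs'bs, hns'sv',
    hns'tb, m5, m6, m7, m8⟩ := hs'
  have hAs : ∀ u, L.Adj s u ↔ (u = s' ∨ u = t ∨ u = v ∨ u = b) := by
    intro u; rw [← mem_linkVerts_iff, hlinks]; simp
  have hAs' : ∀ u, L.Adj s' u ↔ (u = s ∨ u = t ∨ u = v' ∨ u = b) := by
    intro u; rw [← mem_linkVerts_iff, hlinks']; simp
  have hAx : ∀ u, L.Adj x u ↔ (u = t ∨ u = v ∨ u = b ∨ u = v') := by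
    intro u; rw [← mem_linkVerts_iff, hx]; simp
  have aSS' : L.Adj s s' := hadj
  have aST : L.Adj s t := (hAs t).mpr (Or.inr (Or.inl rfl))
  have aSV : L.Adj s v := (hAs v).mpr (Or.inr (Or.inr (Or.inl rfl)))
  have aSB : L.Adj s b := (hAs b).mpr (Or.inr (Or.inr (Or.inr rfl)))
  have aS'T : L.Adj s' t := (hAs' t).mpr (Or.inr (Or.inl rfl))
  have aS'V' : L.Adj s' v' := (hAs' v').mpr (Or.inr (Or.inr (Or.inl rfl)))
  have aS'B : L.Adj s' b := (hAs' b).mpr (Or.inr (Or.inr (Or.inr rfl)))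
  have aXT : L.Adj x t := (hAx t).mpr (Or.inl rfl)
  have aXV : L.Adj x v := (hAx v).mpr (Or.inr (Or.inl rfl))
  have aXB : L.Adj x b := (hAx b).mpr (Or.inr (Or.inr (Or.inl rfl)))
  have aXV' : L.Adj x v' := (hAx v').mpr (Or.inr (Or.inr (Or.inr rfl)))
  have aTV : L.Adj t v := adj_of_face L hstv (by simp) (by simp) htv
  have aTV' : L.Adj t v' := adj_of_face L hs'tv' (by simp) (by simp) htv'
  have aVB : L.Adj v b := adj_of_face L hsvb (by simp) (by simp) hvb
  have aV'B : L.Adj v' b := adj_of_face L hs'v'b (by simp) (by simp) hv'b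
  have nss' : s ≠ s' := aSS'.1
  have nst : s ≠ t := aST.1
  have nsv : s ≠ v := aSV.1
  have nsb : s ≠ b := aSB.1
  have ns'v' : s' ≠ v' := aS'V'.1
  have ns'b : s' ≠ b := aS'B.1
  have nxt : x ≠ t := aXT.1
  have nxv : x ≠ v := aXV.1
  have nxb : x ≠ b := aXB.1
  have nxv' : x ≠ v' := aXV'.1
  have nxs : x ≠ s := by
    rintro rfl
    rw [hlinks] at hx
    have hmem : s' ∈ ({t, v, b, v'} : Finset V) := by rw [← hx]; simp
    simp only [Finset.mem_insert, Finset.mem_singleton] at hmem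
    rcases hmem with h | h | h | h
    exacts [hs't h, hs'v h, hs'b h, ns'v' h]
  have nxs' : x ≠ s' := by
    rintro rfl
    rw [hlinks'] at hx
    have hmem : s ∈ ({t, v, b, v'} : Finset V) := by rw [← hx]; simp
    simp only [Finset.mem_insert, Finset.mem_singleton] at hmem
    rcases hmem with h | h | h | h
    exacts [nst h, nsv h, nsb h, hsv' h]
  have nAtb : ¬ L.Adj t b := by
    intro h
    have hpos : (0 : ℚ) < (M.m t b : ℚ)⁻¹ := by
      have h2 := M.two_le t b h
      have h2' : (0 : ℚ) < (M.m t b : ℚ) := by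
        exact_mod_cast lt_of_lt_of_le (by norm_num) h2
      exact inv_pos.mpr h2'
    have hiff := hflag s t b aST h (adj_symm' L aSB)
    rw [m5, m8] at hiff
    apply hnstb
    apply hiff.mpr
    have h2inv : ((2 : ℕ) : ℚ)⁻¹ = 1 / 2 := by norm_num
    rw [h2inv]
    linarith
  have hxt_faces : ({x, t, v} : Finset V) ∈ L.faces ∧ ({x, t, v'} : Finset V) ∈ L.faces := by
    obtain ⟨w1, w2, hw12, hw1x, hw1t, hw2x, hw2t, hf1, hf2⟩ := exists_two_faces L aXT
    have hclass : ∀ w : V, w ≠ x → w ≠ t → ({x, t, w} : Finset V) ∈ L.faces →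
        w = v ∨ w = v' := by
      intro w hwx hwt hfw
      have haw : L.Adj x w := adj_of_face L hfw (by simp) (by simp) (Ne.symm hwx)
      have htw : L.Adj t w := adj_of_face L hfw (by simp) (by simp) (Ne.symm hwt)
      rcases (hAx w).mp haw with h | h | h | h
      · exact absurd h hwt
      · exact Or.inl h
      · subst h; exact absurd htw nAtb
      · exact Or.inr h
    rcases hclass w1 hw1x hw1t hf1 with rfl | rfl <;>
      rcases hclass w2 hw2x hw2t hf2 with rfl | rfl
    · exact absurd rfl hw12
    · exact ⟨hf1, hf2⟩
    · exact ⟨hf2, hf1⟩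
    · exact absurd rfl hw12
  obtain ⟨hxtv, hxtv'⟩ := hxt_faces
  have hxb_faces : ({x, b, v} : Finset V) ∈ L.faces ∧ ({x, b, v'} : Finset V) ∈ L.faces := by
    obtain ⟨w1, w2, hw12, hw1x, hw1b, hw2x, hw2b, hf1, hf2⟩ := exists_two_faces L aXB
    have hclass : ∀ w : V, w ≠ x → w ≠ b → ({x, b, w} : Finset V) ∈ L.faces →
        w = v ∨ w = v' := by
      intro w hwx hwb hfw
      have haw : L.Adj x w := adj_of_face L hfw (by simp) (by simp) (Ne.symm hwx)
      have hbw : L.Adj b w := adj_of_face L hfw (by simp) (by simp) (Ne.symm hwb)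
      rcases (hAx w).mp haw with h | h | h | h
      · subst h; exact absurd (adj_symm' L hbw) nAtb
      · exact Or.inl h
      · exact absurd h hwb
      · exact Or.inr h
    rcases hclass w1 hw1x hw1b hf1 with rfl | rfl <;>
      rcases hclass w2 hw2x hw2b hf2 with rfl | rfl
    · exact absurd rfl hw12
    · exact ⟨hf1, hf2⟩
    · exact ⟨hf2, hf1⟩
    · exact absurd rfl hw12
  obtain ⟨hxbv, hxbv'⟩ := hxb_faces
  have nAvv' : ¬ L.Adj v v' := by
    intro h
    have hpos : (0 : ℚ) < (M.m v v' : ℚ)⁻¹ := by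
      have h2 := M.two_le v v' h
      have h2' : (0 : ℚ) < (M.m v v' : ℚ) := by
        exact_mod_cast lt_of_lt_of_le (by norm_num) h2
      exact inv_pos.mpr h2'
    have hiff := hflag t v v' aTV h (adj_symm' L aTV')
    rw [m2, M.symm v' t, m6] at hiff
    have hfvv : ({t, v, v'} : Finset V) ∈ L.faces := by
      apply hiff.mpr
      have h2inv : ((2 : ℕ) : ℚ)⁻¹ = 1 / 2 := by norm_num
      rw [h2inv]
      linarith
    have hpin := face_eq_of_edge L htv hstv hxtv
      (finset_ne (a := s) (by simp) (by simp [nst, nsv, Ne.symm nxs]))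
      (by simp) (by simp) (by simp) (by simp) hfvv (by simp) (by simp)
    have hv'm : v' ∈ ({t, v, v'} : Finset V) := by simp
    rcases hpin with h' | h' <;> rw [h'] at hv'm <;>
      simp only [Finset.mem_insert, Finset.mem_singleton] at hv'm
    · rcases hv'm with h'' | h'' | h''
      exacts [hsv' h''.symm, htv' h''.symm, hne h''.symm]
    · rcases hv'm with h'' | h'' | h''
      exacts [nxv' h''.symm, htv' h''.symm, hne h''.symm]
  have E_ts : ∀ g ∈ L.faces, t ∈ g → s ∈ g →
      g = ({s, s', t} : Finset V) ∨ g = ({s, t, v} : Finset V) := fun g hg h1 h2 =>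
    face_eq_of_edge L (Ne.symm nst) hsst hstv
      (finset_ne (a := s') (by simp) (by simp [Ne.symm nss', hs't, hs'v]))
      (by simp) (by simp) (by simp) (by simp) hg h1 h2
  have E_ts' : ∀ g ∈ L.faces, t ∈ g → s' ∈ g →
      g = ({s, s', t} : Finset V) ∨ g = ({s', t, v'} : Finset V) := fun g hg h1 h2 =>
    face_eq_of_edge L (Ne.symm hs't) hsst hs'tv'
      (finset_ne (a := s) (by simp) (by simp [nss', nst, hsv']))
      (by simp) (by simp) (by simp) (by simp) hg h1 h2
  have E_tv : ∀ g ∈ L.faces, t ∈ g → v ∈ g →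
      g = ({s, t, v} : Finset V) ∨ g = ({x, t, v} : Finset V) := fun g hg h1 h2 =>
    face_eq_of_edge L htv hstv hxtv
      (finset_ne (a := s) (by simp) (by simp [Ne.symm nxs, nst, nsv]))
      (by simp) (by simp) (by simp) (by simp) hg h1 h2
  have E_tv' : ∀ g ∈ L.faces, t ∈ g → v' ∈ g →
      g = ({s', t, v'} : Finset V) ∨ g = ({x, t, v'} : Finset V) := fun g hg h1 h2 =>
    face_eq_of_edge L htv' hs'tv' hxtv'
      (finset_ne (a := s') (by simp) (by simp [Ne.symm nxs', hs't, ns'v']))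
      (by simp) (by simp) (by simp) (by simp) hg h1 h2
  have E_tx : ∀ g ∈ L.faces, t ∈ g → x ∈ g →
      g = ({x, t, v} : Finset V) ∨ g = ({x, t, v'} : Finset V) := fun g hg h1 h2 =>
    face_eq_of_edge L (Ne.symm nxt) hxtv hxtv'
      (finset_ne (a := v) (by simp) (by simp [Ne.symm nxv, Ne.symm htv, hne]))
      (by simp) (by simp) (by simp) (by simp) hg h1 h2
  have E_bs : ∀ g ∈ L.faces, b ∈ g → s ∈ g →
      g = ({s, v, b} : Finset V) ∨ g = ({s, b, s'} : Finset V) := fun g hg h1 h2 =>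
    face_eq_of_edge L (Ne.symm nsb) hsvb hsbs
      (finset_ne (a := v) (by simp) (by simp [Ne.symm nsv, hvb, Ne.symm hs'v]))
      (by simp) (by simp) (by simp) (by simp) hg h1 h2
  have E_bs' : ∀ g ∈ L.faces, b ∈ g → s' ∈ g →
      g = ({s, b, s'} : Finset V) ∨ g = ({s', v', b} : Finset V) := fun g hg h1 h2 =>
    face_eq_of_edge L (Ne.symm ns'b) hsbs hs'v'b
      (finset_ne (a := s) (by simp) (by simp [nss', hsv', nsb]))
      (by simp) (by simp) (by simp) (by simp) hg h1 h2
  have E_bv : ∀ g ∈ L.faces, b ∈ g → v ∈ g →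
      g = ({s, v, b} : Finset V) ∨ g = ({x, b, v} : Finset V) := fun g hg h1 h2 =>
    face_eq_of_edge L (Ne.symm hvb) hsvb hxbv
      (finset_ne (a := s) (by simp) (by simp [Ne.symm nxs, nsb, nsv]))
      (by simp) (by simp) (by simp) (by simp) hg h1 h2
  have E_bv' : ∀ g ∈ L.faces, b ∈ g → v' ∈ g →
      g = ({s', v', b} : Finset V) ∨ g = ({x, b, v'} : Finset V) := fun g hg h1 h2 =>
    face_eq_of_edge L (Ne.symm hv'b) hs'v'b hxbv'
      (finset_ne (a := s') (by simp) (by simp [Ne.symm nxs', ns'b, ns'v']))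
      (by simp) (by simp) (by simp) (by simp) hg h1 h2
  have E_bx : ∀ g ∈ L.faces, b ∈ g → x ∈ g →
      g = ({x, b, v} : Finset V) ∨ g = ({x, b, v'} : Finset V) := fun g hg h1 h2 =>
    face_eq_of_edge L (Ne.symm nxb) hxbv hxbv'
      (finset_ne (a := v) (by simp) (by simp [Ne.symm nxv, hvb, hne]))
      (by simp) (by simp) (by simp) (by simp) hg h1 h2
  have E_ss' : ∀ g ∈ L.faces, s ∈ g → s' ∈ g →
      g = ({s, s', t} : Finset V) ∨ g = ({s, b, s'} : Finset V) := fun g hg h1 h2 =>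
    face_eq_of_edge L nss' hsst hsbs
      (finset_ne (a := t) (by simp) (by simp [Ne.symm nst, htb, Ne.symm hs't]))
      (by simp) (by simp) (by simp) (by simp) hg h1 h2
  have E_sv : ∀ g ∈ L.faces, s ∈ g → v ∈ g →
      g = ({s, t, v} : Finset V) ∨ g = ({s, v, b} : Finset V) := fun g hg h1 h2 =>
    face_eq_of_edge L nsv hstv hsvb
      (finset_ne (a := t) (by simp) (by simp [Ne.symm nst, htv, htb]))
      (by simp) (by simp) (by simp) (by simp) hg h1 h2
  have E_s'v' : ∀ g ∈ L.faces, s' ∈ g → v' ∈ g →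
      g = ({s', t, v'} : Finset V) ∨ g = ({s', v', b} : Finset V) := fun g hg h1 h2 =>
    face_eq_of_edge L ns'v' hs'tv' hs'v'b
      (finset_ne (a := t) (by simp) (by simp [Ne.symm hs't, htv', htb]))
      (by simp) (by simp) (by simp) (by simp) hg h1 h2
  have E_xv : ∀ g ∈ L.faces, x ∈ g → v ∈ g →
      g = ({x, t, v} : Finset V) ∨ g = ({x, b, v} : Finset V) := fun g hg h1 h2 =>
    face_eq_of_edge L nxv hxtv hxbv
      (finset_ne (a := t) (by simp) (by simp [Ne.symm nxt, htb, htv]))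
      (by simp) (by simp) (by simp) (by simp) hg h1 h2
  have E_xv' : ∀ g ∈ L.faces, x ∈ g → v' ∈ g →
      g = ({x, t, v'} : Finset V) ∨ g = ({x, b, v'} : Finset V) := fun g hg h1 h2 =>
    face_eq_of_edge L nxv' hxtv' hxbv'
      (finset_ne (a := t) (by simp) (by simp [Ne.symm nxt, htb, htv']))
      (by simp) (by simp) (by simp) (by simp) hg h1 h2
  have hlinkt : ∀ w, L.Adj t w → (w = s ∨ w = s' ∨ w = v ∨ w = v' ∨ w = x) := by
    intro w hw
    have hpath := L.link_connected t s w ⟨Ne.symm nst, {s, s', t}, hsst, by simp, by simp⟩ hw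
    clear hw
    induction hpath with
    | refl => exact Or.inl rfl
    | tail hp hstep ih =>
      rename_i p q
      obtain ⟨hpq, hface⟩ := hstep
      rcases ih with rfl | rfl | rfl | rfl | rfl
      · have h3 := ne_of_face_triple L hface (Ne.symm nst)
        rcases third_of_pin (E_ts _ hface (by simp) (by simp)) with hc | hc <;>
          simp only [Finset.mem_insert, Finset.mem_singleton] at hc <;>
          rcases hc with rfl | rfl | rfl <;>
          first | exact absurd rfl h3.1 | exact absurd rfl h3.2 | simp
      · have h3 := ne_of_face_triple L hface (Ne.symm hs't)
        rcases third_of_pin (E_ts' _ hface (by simp) (by simp)) with hc | hc <;>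
          simp only [Finset.mem_insert, Finset.mem_singleton] at hc <;>
          rcases hc with rfl | rfl | rfl <;>
          first | exact absurd rfl h3.1 | exact absurd rfl h3.2 | simp
      · have h3 := ne_of_face_triple L hface htv
        rcases third_of_pin (E_tv _ hface (by simp) (by simp)) with hc | hc <;>
          simp only [Finset.mem_insert, Finset.mem_singleton] at hc <;>
          rcases hc with rfl | rfl | rfl <;>
          first | exact absurd rfl h3.1 | exact absurd rfl h3.2 | simp
      · have h3 := ne_of_face_triple L hface htv'
        rcases third_of_pin (E_tv' _ hface (by simp) (by simp)) with hc | hc <;>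
          simp only [Finset.mem_insert, Finset.mem_singleton] at hc <;>
          rcases hc with rfl | rfl | rfl <;>
          first | exact absurd rfl h3.1 | exact absurd rfl h3.2 | simp
      · have h3 := ne_of_face_triple L hface (Ne.symm nxt)
        rcases third_of_pin (E_tx _ hface (by simp) (by simp)) with hc | hc <;>
          simp only [Finset.mem_insert, Finset.mem_singleton] at hc <;>
          rcases hc with rfl | rfl | rfl <;>
          first | exact absurd rfl h3.1 | exact absurd rfl h3.2 | simp
  have hlinkb : ∀ w, L.Adj b w → (w = s ∨ w = s' ∨ w = v ∨ w = v' ∨ w = x) := by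
    intro w hw
    have hpath := L.link_connected b s w ⟨Ne.symm nsb, {s, v, b}, hsvb, by simp, by simp⟩ hw
    clear hw
    induction hpath with
    | refl => exact Or.inl rfl
    | tail hp hstep ih =>
      rename_i p q
      obtain ⟨hpq, hface⟩ := hstep
      rcases ih with rfl | rfl | rfl | rfl | rfl
      · have h3 := ne_of_face_triple L hface (Ne.symm nsb)
        rcases third_of_pin (E_bs _ hface (by simp) (by simp)) with hc | hc <;>
          simp only [Finset.mem_insert, Finset.mem_singleton] at hc <;>
          rcases hc with rfl | rfl | rfl <;>
          first | exact absurd rfl h3.1 | exact absurd rfl h3.2 | simp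
      · have h3 := ne_of_face_triple L hface (Ne.symm ns'b)
        rcases third_of_pin (E_bs' _ hface (by simp) (by simp)) with hc | hc <;>
          simp only [Finset.mem_insert, Finset.mem_singleton] at hc <;>
          rcases hc with rfl | rfl | rfl <;>
          first | exact absurd rfl h3.1 | exact absurd rfl h3.2 | simp
      · have h3 := ne_of_face_triple L hface (Ne.symm hvb)
        rcases third_of_pin (E_bv _ hface (by simp) (by simp)) with hc | hc <;>
          simp only [Finset.mem_insert, Finset.mem_singleton] at hc <;>
          rcases hc with rfl | rfl | rfl <;>
          first | exact absurd rfl h3.1 | exact absurd rfl h3.2 | simp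
      · have h3 := ne_of_face_triple L hface (Ne.symm hv'b)
        rcases third_of_pin (E_bv' _ hface (by simp) (by simp)) with hc | hc <;>
          simp only [Finset.mem_insert, Finset.mem_singleton] at hc <;>
          rcases hc with rfl | rfl | rfl <;>
          first | exact absurd rfl h3.1 | exact absurd rfl h3.2 | simp
      · have h3 := ne_of_face_triple L hface (Ne.symm nxb)
        rcases third_of_pin (E_bx _ hface (by simp) (by simp)) with hc | hc <;>
          simp only [Finset.mem_insert, Finset.mem_singleton] at hc <;>
          rcases hc with rfl | rfl | rfl <;>
          first | exact absurd rfl h3.1 | exact absurd rfl h3.2 | simp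
  have hlinkv : ∀ w, L.Adj v w → (w = s ∨ w = t ∨ w = b ∨ w = x) := by
    intro w hw
    have hpath := L.link_connected v s w ⟨Ne.symm nsv, {s, t, v}, hstv, by simp, by simp⟩ hw
    clear hw
    induction hpath with
    | refl => exact Or.inl rfl
    | tail hp hstep ih =>
      rename_i p q
      obtain ⟨hpq, hface⟩ := hstep
      rcases ih with rfl | rfl | rfl | rfl
      · have h3 := ne_of_face_triple L hface (Ne.symm nsv)
        rcases third_of_pin (E_sv _ hface (by simp) (by simp)) with hc | hc <;>
          simp only [Finset.mem_insert, Finset.mem_singleton] at hc <;>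
          rcases hc with rfl | rfl | rfl <;>
          first | exact absurd rfl h3.1 | exact absurd rfl h3.2 | simp
      · have h3 := ne_of_face_triple L hface (Ne.symm htv)
        rcases third_of_pin (E_tv _ hface (by simp) (by simp)) with hc | hc <;>
          simp only [Finset.mem_insert, Finset.mem_singleton] at hc <;>
          rcases hc with rfl | rfl | rfl <;>
          first | exact absurd rfl h3.1 | exact absurd rfl h3.2 | simp
      · have h3 := ne_of_face_triple L hface hvb
        rcases third_of_pin (E_bv _ hface (by simp) (by simp)) with hc | hc <;>
          simp only [Finset.mem_insert, Finset.mem_singleton] at hc <;>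
          rcases hc with rfl | rfl | rfl <;>
          first | exact absurd rfl h3.1 | exact absurd rfl h3.2 | simp
      · have h3 := ne_of_face_triple L hface (Ne.symm nxv)
        rcases third_of_pin (E_xv _ hface (by simp) (by simp)) with hc | hc <;>
          simp only [Finset.mem_insert, Finset.mem_singleton] at hc <;>
          rcases hc with rfl | rfl | rfl <;>
          first | exact absurd rfl h3.1 | exact absurd rfl h3.2 | simp
  have hlinkv' : ∀ w, L.Adj v' w → (w = s' ∨ w = t ∨ w = b ∨ w = x) := by
    intro w hw
    have hpath := L.link_connected v' s' w
      ⟨Ne.symm ns'v', {s', t, v'}, hs'tv', by simp, by simp⟩ hw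
    clear hw
    induction hpath with
    | refl => exact Or.inl rfl
    | tail hp hstep ih =>
      rename_i p q
      obtain ⟨hpq, hface⟩ := hstep
      rcases ih with rfl | rfl | rfl | rfl
      · have h3 := ne_of_face_triple L hface (Ne.symm ns'v')
        rcases third_of_pin (E_s'v' _ hface (by simp) (by simp)) with hc | hc <;>
          simp only [Finset.mem_insert, Finset.mem_singleton] at hc <;>
          rcases hc with rfl | rfl | rfl <;>
          first | exact absurd rfl h3.1 | exact absurd rfl h3.2 | simp
      · have h3 := ne_of_face_triple L hface (Ne.symm htv')
        rcases third_of_pin (E_tv' _ hface (by simp) (by simp)) with hc | hc <;>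
          simp only [Finset.mem_insert, Finset.mem_singleton] at hc <;>
          rcases hc with rfl | rfl | rfl <;>
          first | exact absurd rfl h3.1 | exact absurd rfl h3.2 | simp
      · have h3 := ne_of_face_triple L hface hv'b
        rcases third_of_pin (E_bv' _ hface (by simp) (by simp)) with hc | hc <;>
          simp only [Finset.mem_insert, Finset.mem_singleton] at hc <;>
          rcases hc with rfl | rfl | rfl <;>
          first | exact absurd rfl h3.1 | exact absurd rfl h3.2 | simp
      · have h3 := ne_of_face_triple L hface (Ne.symm nxv')
        rcases third_of_pin (E_xv' _ hface (by simp) (by simp)) with hc | hc <;>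
          simp only [Finset.mem_insert, Finset.mem_singleton] at hc <;>
          rcases hc with rfl | rfl | rfl <;>
          first | exact absurd rfl h3.1 | exact absurd rfl h3.2 | simp
  have hV : ∀ u : V, u = s ∨ u = s' ∨ u = t ∨ u = b ∨ u = v ∨ u = v' ∨ u = x := by
    intro u
    have hpath := L.conn s u
    induction hpath with
    | refl => exact Or.inl rfl
    | tail hp hstep ih =>
      rename_i p q
      have hadj2 : L.Adj p q := hstep
      rcases ih with rfl | rfl | rfl | rfl | rfl | rfl | rfl
      · rcases (hAs q).mp hadj2 with rfl | rfl | rfl | rfl <;> simp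
      · rcases (hAs' q).mp hadj2 with rfl | rfl | rfl | rfl <;> simp
      · rcases hlinkt q hadj2 with rfl | rfl | rfl | rfl | rfl <;> simp
      · rcases hlinkb q hadj2 with rfl | rfl | rfl | rfl | rfl <;> simp
      · rcases hlinkv q hadj2 with rfl | rfl | rfl | rfl <;> simp
      · rcases hlinkv' q hadj2 with rfl | rfl | rfl | rfl <;> simp
      · rcases (hAx q).mp hadj2 with rfl | rfl | rfl | rfl <;> simp
  have hfaces10 : ∀ f ∈ L.faces,
      f = ({s, s', t} : Finset V) ∨ f = ({s, t, v} : Finset V) ∨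
      f = ({s, v, b} : Finset V) ∨ f = ({s, b, s'} : Finset V) ∨
      f = ({s', t, v'} : Finset V) ∨ f = ({s', v', b} : Finset V) ∨
      f = ({x, t, v} : Finset V) ∨ f = ({x, t, v'} : Finset V) ∨
      f = ({x, b, v} : Finset V) ∨ f = ({x, b, v'} : Finset V) := by
    intro f hf
    have h3 := L.card_eq_three f hf
    obtain ⟨a, ha⟩ := Finset.card_pos.mp (by omega : 0 < f.card)
    obtain ⟨u, w, huw, hau, haw, hfw⟩ := exists_third L hf ha
    have hu : u ∈ f := by rw [hfw]; simp
    have hAau : L.Adj a u := adj_of_face L hf ha hu hau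
    rcases hV a with rfl | rfl | rfl | rfl | rfl | rfl | rfl
    · rcases (hAs u).mp hAau with rfl | rfl | rfl | rfl
      · rcases E_ss' f hf ha hu with h | h <;> subst h <;> simp
      · rcases E_ts f hf hu ha with h | h <;> subst h <;> simp
      · rcases E_sv f hf ha hu with h | h <;> subst h <;> simp
      · rcases E_bs f hf hu ha with h | h <;> subst h <;> simp
    · rcases (hAs' u).mp hAau with rfl | rfl | rfl | rfl
      · rcases E_ss' f hf hu ha with h | h <;> subst h <;> simp
      · rcases E_ts' f hf hu ha with h | h <;> subst h <;> simp
      · rcases E_s'v' f hf ha hu with h | h <;> subst h <;> simp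
      · rcases E_bs' f hf hu ha with h | h <;> subst h <;> simp
    · rcases hlinkt u hAau with rfl | rfl | rfl | rfl | rfl
      · rcases E_ts f hf ha hu with h | h <;> subst h <;> simp
      · rcases E_ts' f hf ha hu with h | h <;> subst h <;> simp
      · rcases E_tv f hf ha hu with h | h <;> subst h <;> simp
      · rcases E_tv' f hf ha hu with h | h <;> subst h <;> simp
      · rcases E_tx f hf ha hu with h | h <;> subst h <;> simp
    · rcases hlinkb u hAau with rfl | rfl | rfl | rfl | rfl
      · rcases E_bs f hf ha hu with h | h <;> subst h <;> simp
      · rcases E_bs' f hf ha hu with h | h <;> subst h <;> simp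
      · rcases E_bv f hf ha hu with h | h <;> subst h <;> simp
      · rcases E_bv' f hf ha hu with h | h <;> subst h <;> simp
      · rcases E_bx f hf ha hu with h | h <;> subst h <;> simp
    · rcases hlinkv u hAau with rfl | rfl | rfl | rfl
      · rcases E_sv f hf hu ha with h | h <;> subst h <;> simp
      · rcases E_tv f hf hu ha with h | h <;> subst h <;> simp
      · rcases E_bv f hf hu ha with h | h <;> subst h <;> simp
      · rcases E_xv f hf hu ha with h | h <;> subst h <;> simp
    · rcases hlinkv' u hAau with rfl | rfl | rfl | rfl
      · rcases E_s'v' f hf hu ha with h | h <;> subst h <;> simp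
      · rcases E_tv' f hf hu ha with h | h <;> subst h <;> simp
      · rcases E_bv' f hf hu ha with h | h <;> subst h <;> simp
      · rcases E_xv' f hf hu ha with h | h <;> subst h <;> simp
    · rcases (hAx u).mp hAau with rfl | rfl | rfl | rfl
      · rcases E_tx f hf hu ha with h | h <;> subst h <;> simp
      · rcases E_xv f hf ha hu with h | h <;> subst h <;> simp
      · rcases E_bx f hf hu ha with h | h <;> subst h <;> simp
      · rcases E_xv' f hf ha hu with h | h <;> subst h <;> simp
  set C : ZMod 5 → V := fun i : ZMod 5 =>
    if i = 0 then s else if i = 1 then v else if i = 2 then x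
    else if i = 3 then v' else s' with hC
  have hi5 : ∀ i : ZMod 5, i = 0 ∨ i = 1 ∨ i = 2 ∨ i = 3 ∨ i = 4 := by decide
  have C0 : C 0 = s := by simp [hC]
  have C1 : C 1 = v := by
    simp [hC, show (1 : ZMod 5) ≠ 0 by decide]
  have C2 : C 2 = x := by
    simp [hC, show (2 : ZMod 5) ≠ 0 by decide, show (2 : ZMod 5) ≠ 1 by decide]
  have C3 : C 3 = v' := by
    simp [hC, show (3 : ZMod 5) ≠ 0 by decide, show (3 : ZMod 5) ≠ 1 by decide,
      show (3 : ZMod 5) ≠ 2 by decide]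
  have C4 : C 4 = s' := by
    simp [hC, show (4 : ZMod 5) ≠ 0 by decide, show (4 : ZMod 5) ≠ 1 by decide,
      show (4 : ZMod 5) ≠ 2 by decide, show (4 : ZMod 5) ≠ 3 by decide]
  have A01 : (0 : ZMod 5) + 1 = 1 := by decide
  have A12 : (1 : ZMod 5) + 1 = 2 := by decide
  have A23 : (2 : ZMod 5) + 1 = 3 := by decide
  have A34 : (3 : ZMod 5) + 1 = 4 := by decide
  have A40 : (4 : ZMod 5) + 1 = 0 := by decide
  refine ⟨htb, ?_, ?_, ?_, ?_, nAtb, ?_, ?_⟩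
  · -- injectivity
    intro i j hij
    rcases hi5 i with rfl | rfl | rfl | rfl | rfl <;>
      rcases hi5 j with rfl | rfl | rfl | rfl | rfl <;>
      first
        | rfl
        | (simp only [C0, C1, C2, C3, C4] at hij
           first
             | exact absurd hij nsv | exact absurd hij (Ne.symm nsv)
             | exact absurd hij (Ne.symm nxs) | exact absurd hij nxs
             | exact absurd hij hsv' | exact absurd hij (Ne.symm hsv')
             | exact absurd hij nss' | exact absurd hij (Ne.symm nss')
             | exact absurd hij (Ne.symm nxv) | exact absurd hij nxv
             | exact absurd hij hne | exact absurd hij (Ne.symm hne)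
             | exact absurd hij (Ne.symm hs'v) | exact absurd hij hs'v
             | exact absurd hij nxv' | exact absurd hij (Ne.symm nxv')
             | exact absurd hij nxs' | exact absurd hij (Ne.symm nxs')
             | exact absurd hij (Ne.symm ns'v') | exact absurd hij ns'v')
  · -- t ≠ C i
    intro i
    rcases hi5 i with rfl | rfl | rfl | rfl | rfl
    · rw [C0]; exact Ne.symm nst
    · rw [C1]; exact htv
    · rw [C2]; exact Ne.symm nxt
    · rw [C3]; exact htv'
    · rw [C4]; exact Ne.symm hs't
  · -- b ≠ C i
    intro i
    rcases hi5 i with rfl | rfl | rfl | rfl | rfl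
    · rw [C0]; exact Ne.symm nsb
    · rw [C1]; exact Ne.symm hvb
    · rw [C2]; exact Ne.symm nxb
    · rw [C3]; exact Ne.symm hv'b
    · rw [C4]; exact Ne.symm ns'b
  · -- totality
    intro u
    rcases hV u with rfl | rfl | rfl | rfl | rfl | rfl | rfl
    · exact Or.inr (Or.inr ⟨0, C0.symm⟩)
    · exact Or.inr (Or.inr ⟨4, C4.symm⟩)
    · exact Or.inl rfl
    · exact Or.inr (Or.inl rfl)
    · exact Or.inr (Or.inr ⟨1, C1.symm⟩)
    · exact Or.inr (Or.inr ⟨3, C3.symm⟩)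
    · exact Or.inr (Or.inr ⟨2, C2.symm⟩)
  · -- adjacency around the cycle
    intro i
    rcases hi5 i with rfl | rfl | rfl | rfl | rfl
    · rw [A01, C0, C1]; exact aSV
    · rw [A12, C1, C2]; exact adj_symm' L aXV
    · rw [A23, C2, C3]; exact aXV'
    · rw [A34, C3, C4]; exact adj_symm' L aS'V'
    · rw [A40, C4, C0]; exact adj_symm' L aSS'
  · -- faces
    intro f
    constructor
    · intro hf
      rcases hfaces10 f hf with rfl | rfl | rfl | rfl | rfl | rfl | rfl | rfl | rfl | rfl
      · refine ⟨4, Or.inl ?_⟩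
        rw [A40, C4, C0]
        exact tri_comm13 s s' t
      · refine ⟨0, Or.inl ?_⟩
        rw [A01, C0, C1]
        exact tri_comm12 s t v
      · refine ⟨0, Or.inr ?_⟩
        rw [A01, C0, C1]
        exact (tri_rot b s v).symm
      · refine ⟨4, Or.inr ?_⟩
        rw [A40, C4, C0]
        exact tri_rot s b s'
      · refine ⟨3, Or.inl ?_⟩
        rw [A34, C3, C4]
        exact tri_rot s' t v'
      · refine ⟨3, Or.inr ?_⟩
        rw [A34, C3, C4]
        exact tri_comm13 s' v' b
      · refine ⟨1, Or.inl ?_⟩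
        rw [A12, C1, C2]
        exact tri_rot x t v
      · refine ⟨2, Or.inl ?_⟩
        rw [A23, C2, C3]
        exact tri_comm12 x t v'
      · refine ⟨1, Or.inr ?_⟩
        rw [A12, C1, C2]
        exact tri_rot x b v
      · refine ⟨2, Or.inr ?_⟩
        rw [A23, C2, C3]
        exact tri_comm12 x b v'
    · rintro ⟨i, h | h⟩ <;> rcases hi5 i with rfl | rfl | rfl | rfl | rfl
      · rw [A01, C0, C1] at h
        rw [h, show ({t, s, v} : Finset V) = {s, t, v} from tri_comm12 t s v]
        exact hstv
      · rw [A12, C1, C2] at h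
        rw [h, show ({t, v, x} : Finset V) = {x, t, v} from (tri_rot x t v).symm]
        exact hxtv
      · rw [A23, C2, C3] at h
        rw [h, show ({t, x, v'} : Finset V) = {x, t, v'} from tri_comm12 t x v']
        exact hxtv'
      · rw [A34, C3, C4] at h
        rw [h, show ({t, v', s'} : Finset V) = {s', t, v'} from (tri_rot s' t v').symm]
        exact hs'tv'
      · rw [A40, C4, C0] at h
        rw [h, show ({t, s', s} : Finset V) = {s, s', t} from tri_comm13 t s' s]
        exact hsst
      · rw [A01, C0, C1] at h
        rw [h, show ({b, s, v} : Finset V) = {s, v, b} from tri_rot b s v]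
        exact hsvb
      · rw [A12, C1, C2] at h
        rw [h, show ({b, v, x} : Finset V) = {x, b, v} from (tri_rot x b v).symm]
        exact hxbv
      · rw [A23, C2, C3] at h
        rw [h, show ({b, x, v'} : Finset V) = {x, b, v'} from tri_comm12 b x v']
        exact hxbv'
      · rw [A34, C3, C4] at h
        rw [h, show ({b, v', s'} : Finset V) = {s', v', b} from tri_comm13 b v' s']
        exact hs'v'b
      · rw [A40, C4, C0] at h
        rw [h, show ({b, s', s} : Finset V) = {s, b, s'} from (tri_rot s b s').symm]
        exact hsbs
end
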